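/- arXiv:math/0506413 — 6 statements merged into one kernel-verified Lean document; each statement's English description precedes it below -/
import Mathlib

section
/- Let S = {x_0, x_{i_1}, …, x_{i_L}} with 0 < i_1 < i_2 < ⋯ < i_L, and let T1 and T2 be trees with the same number of interior nodes representing the element w of Thompson's group F (the pair (T1,T2) need not be reduced). Let w′ be the partially reduced normal form of maximal length representing w. Then the restricted right-arm rotation distance d_RRA^S(T1,T2) is defined if and only if no generator x_t or x_t⁻¹ with 1 ≤ t ≤ i_1 − 1 occurs in w′. -/
/-! Binary trees, rotations, rotation distances, and Thompson's group `F`. -/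

/-- Finite rooted binary trees: every interior node has two ordered children. -/
inductive BinTree : Type
  | leaf : BinTree
  | node : BinTree → BinTree → BinTree

namespace BinTree

/-- The number of interior nodes of a tree. -/
def numNodes : BinTree → ℕ
  | leaf => 0
  | node l r => numNodes l + numNodes r + 1

/-- The number of leaves of a tree. -/
def numLeaves : BinTree → ℕ
  | leaf => 1
  | node l r => numLeaves l + numLeaves r

/-- `RotR k T T'` : `T'` is obtained from `T` by a right rotation at the node at
level `k` on the right arm of `T` (level `0` is the root). -/
inductive RotR : ℕ → BinTree → BinTree → Prop
  | root (A B C : BinTree) : RotR 0 (node (node A B) C) (node A (node B C))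
  | step {k : ℕ} {R R' : BinTree} (L : BinTree) :
      RotR k R R' → RotR (k + 1) (node L R) (node L R')

/-- `RotLA k T T'` : `T'` is obtained from `T` by a right rotation at the node at
level `k` on the left arm of `T` (level `0` is the root). -/
inductive RotLA : ℕ → BinTree → BinTree → Prop
  | root (A B C : BinTree) : RotLA 0 (node (node A B) C) (node A (node B C))
  | step {k : ℕ} {L L' : BinTree} (R : BinTree) :
      RotLA k L L' → RotLA (k + 1) (node L R) (node L' R)

/-- One rotation (right or left) performed at a right-arm node whose level lies in `levels`. -/
def RightArmStep (levels : Set ℕ) (T T' : BinTree) : Prop :=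
  ∃ k ∈ levels, RotR k T T' ∨ RotR k T' T

/-- One rotation (right or left) performed at any node of the right arm. -/
def RAStep (T T' : BinTree) : Prop :=
  ∃ k, RotR k T T' ∨ RotR k T' T

/-- One rotation at a right-arm node with level in `rlevels`, or at a left-arm node
with level in `llevels`. -/
def SpinalStep (rlevels llevels : Set ℕ) (T T' : BinTree) : Prop :=
  (∃ k ∈ rlevels, RotR k T T' ∨ RotR k T' T) ∨ (∃ k ∈ llevels, RotLA k T T' ∨ RotLA k T' T)

/-- `ChainLen r n T T'` : `T` is transformed into `T'` by a sequence of exactly `n`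
steps of the relation `r` (rotations automatically keep the number of interior
nodes constant). -/
def ChainLen (r : BinTree → BinTree → Prop) : ℕ → BinTree → BinTree → Prop
  | 0, T, T' => T = T'
  | n + 1, T, T' => ∃ U, r T U ∧ ChainLen r n U T'

/-- The rotation distance associated to the step relation `r` is defined. -/
def Reachable (r : BinTree → BinTree → Prop) (T1 T2 : BinTree) : Prop :=
  ∃ n, ChainLen r n T1 T2

/-- The rotation distance associated to the step relation `r` : the least number of
steps transforming the first tree into the second. -/
noncomputable def stepDist (r : BinTree → BinTree → Prop) (T1 T2 : BinTree) : ℕ :=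
  sInf {n | ChainLen r n T1 T2}

/-- The all-right tree with `n` interior nodes. -/
def allRight : ℕ → BinTree
  | 0 => leaf
  | n + 1 => node leaf (allRight n)

/-- `SibPair T k` : leaves number `k` and `k+1` of `T` are the two children of a
common (interior) node of `T`. -/
def SibPair : BinTree → ℕ → Prop
  | leaf, _ => False
  | node leaf leaf, k => k = 0
  | node L R, k => SibPair L k ∨ ∃ j, SibPair R j ∧ k = numLeaves L + j

/-- A tree pair `(T1,T2)` is reduced if no `k` is a sibling pair in both trees. -/
def ReducedPair (T1 T2 : BinTree) : Prop :=
  ¬∃ k, SibPair T1 k ∧ SibPair T2 k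

/-- Add one to the first entry of a list. -/
def incFirst : List ℕ → List ℕ
  | [] => []
  | a :: l => (a + 1) :: l

/-- Leaf exponents of the leaves of a subtree which hangs strictly off the
(global) right arm, so that every node of the subtree contributes. -/
def lexps : BinTree → List ℕ
  | leaf => [0]
  | node L R => incFirst (lexps L) ++ lexps R

/-- The list of leaf exponents of a tree: the `k`-th entry is the length of the
longest path of left edges starting at leaf `k` not touching the right arm. -/
def exps : BinTree → List ℕ
  | leaf => [0]
  | node L R => lexps L ++ exps R

/-- `LeafChildOfRA T h m` : leaf number `m` of `T` is a child of the node at level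
`h` on the right arm of `T`. -/
def LeafChildOfRA : BinTree → ℕ → ℕ → Prop
  | leaf, _, _ => False
  | node L R, 0, m => (L = leaf ∧ m = 0) ∨ (R = leaf ∧ m = numLeaves L)
  | node L R, h + 1, m => ∃ j, LeafChildOfRA R h j ∧ m = numLeaves L + j

/-- `ExpCaretChildOfRA T h m` : leaves `m` and `m+1` of `T` are the two leaves of an
exposed node whose parent is the node at level `h` on the right arm of `T`. -/
def ExpCaretChildOfRA : BinTree → ℕ → ℕ → Prop
  | leaf, _, _ => False
  | node L R, 0, m =>
      (L = node leaf leaf ∧ m = 0) ∨ (R = node leaf leaf ∧ m = numLeaves L)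
  | node L R, h + 1, m => ∃ j, ExpCaretChildOfRA R h j ∧ m = numLeaves L + j

end BinTree

/-- The defining relators of Thompson's group `F`:
`x_i⁻¹ x_n x_i = x_{n+1}` for all `i < n`. -/
def thompsonRels : Set (FreeGroup ℕ) :=
  { w | ∃ i n : ℕ, i < n ∧
      w = (FreeGroup.of i)⁻¹ * FreeGroup.of n * FreeGroup.of i * (FreeGroup.of (n + 1))⁻¹ }

/-- Thompson's group `F`, presented by its standard infinite presentation. -/
abbrev ThompsonF : Type := PresentedGroup thompsonRels

/-- The standard generator `x_i` of Thompson's group `F`. -/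
def xg (i : ℕ) : ThompsonF := PresentedGroup.of i

/-- The standard infinite generating set `{x_0, x_1, x_2, …}` of `F`. -/
def stdGens : Set ThompsonF := Set.range xg

/-- The word length of `w` with respect to a generating set `S` : the least `k`
such that `w` is a product of `k` elements of `S ∪ S⁻¹`. -/
noncomputable def wordLen (S : Set ThompsonF) (w : ThompsonF) : ℕ :=
  sInf {k | ∃ f : Fin k → ThompsonF, (∀ i, f i ∈ S ∪ S⁻¹) ∧ (List.ofFn f).prod = w}

/-- The normal form word
`x_0^{p 0} x_1^{p 1} ⋯ x_{N-1}^{p (N-1)} x_{N-1}^{-(q (N-1))} ⋯ x_1^{-(q 1)} x_0^{-(q 0)}`. -/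
def nfWord (p q : ℕ → ℕ) (N : ℕ) : ThompsonF :=
  ((List.range N).map fun i => xg i ^ p i).prod *
    ((List.range N).reverse.map fun j => (xg j ^ q j)⁻¹).prod

/-- The element of Thompson's group `F` represented by the tree pair `(T1, T2)` :
the positive exponents are the leaf exponents of `T2`, the negative ones those of `T1`. -/
def treePairElem (T1 T2 : BinTree) : ThompsonF :=
  nfWord (fun k => (BinTree.exps T2).getD k 0) (fun k => (BinTree.exps T1).getD k 0)
    (max (BinTree.exps T1).length (BinTree.exps T2).length)

/-- One step of reduction of a normal form (given by its positive exponent function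
and its negative exponent function): cancel one `x_i` against one `x_i⁻¹` (possible
when both occur but neither `x_{i+1}` nor `x_{i+1}⁻¹` does) and shift all higher
indices down by one. -/
def shiftDown (i : ℕ) (p : ℕ → ℕ) : ℕ → ℕ := fun m =>
  if m < i then p m else if m = i then p i - 1 else p (m + 1)

/-- One step of partial reduction: a standard reduction at an index `i > 0`, i.e.
one which never cancels `x_0` against `x_0⁻¹`. -/
def PRedStep (a b : (ℕ → ℕ) × (ℕ → ℕ)) : Prop :=
  ∃ i, 0 < i ∧ 0 < a.1 i ∧ 0 < a.2 i ∧ a.1 (i + 1) = 0 ∧ a.2 (i + 1) = 0 ∧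
    b = (shiftDown i a.1, shiftDown i a.2)

open BinTree


namespace BinTree

/-- depth of the left spine -/
def spineDepth : BinTree → ℕ
  | leaf => 0
  | node A _ => spineDepth A + 1

/-- trees hanging off the left spine, deepest first -/
def spineC : BinTree → List BinTree
  | leaf => []
  | node A B => spineC A ++ [B]

theorem lexps_spine (L : BinTree) :
    lexps L = spineDepth L :: (spineC L).flatMap lexps := by
  induction L with
  | leaf => rfl
  | node A B ihA ihB =>
      simp only [lexps, spineDepth, spineC, ihA, incFirst, List.flatMap_append,
        List.flatMap_cons, List.flatMap_nil, List.append_nil, List.cons_append]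

theorem numLeaves_eq (T : BinTree) : numLeaves T = numNodes T + 1 := by
  induction T with
  | leaf => rfl
  | node L R ihL ihR => simp [numLeaves, numNodes, ihL, ihR]; omega

theorem incFirst_length (l : List ℕ) : (incFirst l).length = l.length := by
  cases l <;> rfl

theorem lexps_length (L : BinTree) : (lexps L).length = numLeaves L := by
  induction L with
  | leaf => rfl
  | node A B ihA ihB => simp [lexps, numLeaves, incFirst_length, ihA, ihB]

theorem lexps_concat (L : BinTree) : ∃ l, lexps L = l ++ [0] := by
  induction L with
  | leaf => exact ⟨[], rfl⟩
  | node A B ihA ihB =>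
      obtain ⟨l, hl⟩ := ihB
      exact ⟨incFirst (lexps A) ++ l, by simp [lexps, hl]⟩

/-- hang a list of trees along a right arm -/
def hang : List BinTree → BinTree
  | [] => leaf
  | B :: l => node B (hang l)

def armBlocks : BinTree → List BinTree
  | leaf => []
  | node L R => L :: armBlocks R

theorem hang_armBlocks (T : BinTree) : hang (armBlocks T) = T := by
  induction T with
  | leaf => rfl
  | node L R ihL ihR => simp [armBlocks, hang, ihR]

theorem exps_armBlocks (T : BinTree) :
    exps T = (armBlocks T).flatMap lexps ++ [0] := by
  induction T with
  | leaf => rfl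
  | node L R ihL ihR => simp [exps, armBlocks, ihR]

theorem exps_hang (l : List BinTree) :
    exps (hang l) = l.flatMap lexps ++ [0] := by
  induction l with
  | nil => rfl
  | cons B l ih => simp [hang, exps, ih]

theorem exps_length (T : BinTree) : (exps T).length = numNodes T + 1 := by
  induction T with
  | leaf => rfl
  | node L R ihL ihR =>
      simp [exps, lexps_length, numLeaves_eq, ihR, numNodes]; omega

theorem numNodes_hang (l : List BinTree) :
    numNodes (hang l) = (l.map numNodes).sum + l.length := by
  induction l with
  | nil => rfl
  | cons B l ih => simp [hang, numNodes, ih]; omega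

theorem getD_concat_zero (l : List ℕ) (k : ℕ) : (l ++ [0]).getD k 0 = l.getD k 0 := by
  induction l generalizing k with
  | nil => cases k <;> simp [List.getD]
  | cons a l ih =>
      cases k with
      | zero => simp
      | succ n => simpa [List.getD] using congrArg (fun o => Option.getD o 0) (by simp : (l ++ [0])[n]? = _) |>.trans (ih n) |>.trans rfl

/-- `e` is (as a function) the exponent sequence of some "marked" tree:
first entry arbitrary, then the leaf exponents of a list of blocks. -/
def Valid (e : ℕ → ℕ) : Prop :=
  ∃ s Bs, ∀ k, e k = (s :: (Bs : List BinTree).flatMap lexps).getD k 0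

theorem exps_node_decomp (L R : BinTree) :
    exps (node L R)
      = spineDepth L :: ((spineC L ++ armBlocks R).flatMap lexps ++ [0]) := by
  have : exps (node L R) = lexps L ++ exps R := rfl
  rw [this, lexps_spine, exps_armBlocks]
  simp

theorem valid_expsF (T : BinTree) : Valid (fun k => (exps T).getD k 0) := by
  cases T with
  | leaf => exact ⟨0, [], by intro k; cases k <;> simp [exps, List.getD]⟩
  | node L R =>
      refine ⟨spineDepth L, spineC L ++ armBlocks R, fun k => ?_⟩
      rw [exps_node_decomp]
      have : spineDepth L :: ((spineC L ++ armBlocks R).flatMap lexps ++ [0])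
          = (spineDepth L :: (spineC L ++ armBlocks R).flatMap lexps) ++ [0] := by simp
      rw [this]
      exact (getD_concat_zero _ k)

end BinTree

namespace BinTree

/-- `BlockEnd e t v u` : the block starting at position `t` with head value `v`
in the sequence `e` ends at position `u`. -/
inductive BlockEnd (e : ℕ → ℕ) : ℕ → ℕ → ℕ → Prop
  | zero (t : ℕ) : BlockEnd e t 0 (t+1)
  | succ {t v u w : ℕ} : BlockEnd e t v u → BlockEnd e u (e u) w → BlockEnd e t (v+1) w

/-- `Steps e t c u` : walking `c` consecutive blocks from position `t` ends at `u`. -/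
inductive Steps (e : ℕ → ℕ) : ℕ → ℕ → ℕ → Prop
  | refl (t : ℕ) : Steps e t 0 t
  | succ {t c u w : ℕ} : Steps e t c u → BlockEnd e u (e u) w → Steps e t (c+1) w

theorem BlockEnd.lt {e : ℕ → ℕ} {t v u : ℕ} (h : BlockEnd e t v u) : t < u := by
  induction h with
  | zero t => omega
  | succ h1 h2 ih1 ih2 => omega

theorem Steps.le {e : ℕ → ℕ} {t c u : ℕ} (h : Steps e t c u) : t + c ≤ u := by
  induction h with
  | refl => omega
  | succ h1 h2 ih => have := h2.lt; omega

theorem BlockEnd.det {e : ℕ → ℕ} {t v u u' : ℕ} (h : BlockEnd e t v u)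
    (h' : BlockEnd e t v u') : u = u' := by
  induction h generalizing u' with
  | zero t => cases h'; rfl
  | succ h1 h2 ih1 ih2 =>
      cases h' with
      | succ h1' h2' =>
          have := ih1 h1'; subst this
          exact ih2 h2'

theorem Steps.det {e : ℕ → ℕ} {t c u u' : ℕ} (h : Steps e t c u)
    (h' : Steps e t c u') : u = u' := by
  induction h generalizing u' with
  | refl => cases h'; rfl
  | succ h1 h2 ih =>
      cases h' with
      | succ h1' h2' =>
          have := ih h1'; subst this
          exact h2.det h2'

theorem BlockEnd.congr {e e' : ℕ → ℕ} {t v u : ℕ} (h : BlockEnd e t v u)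
    (hag : ∀ x, t < x → x < u → e' x = e x) : BlockEnd e' t v u := by
  induction h with
  | zero t => exact .zero t
  | succ h1 h2 ih1 ih2 =>
      have hu := h1.lt
      have hw := h2.lt
      refine .succ (ih1 fun x hx1 hx2 => hag x hx1 (by omega)) ?_
      have he : e' _ = e _ := hag _ hu hw
      rw [he]
      exact ih2 fun x hx1 hx2 => hag x (by omega) hx2

theorem Steps.congr {e e' : ℕ → ℕ} {t c u : ℕ} (h : Steps e t c u)
    (hag : ∀ x, t ≤ x → x < u → e' x = e x) : Steps e' t c u := by
  induction h with
  | refl => exact .refl _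
  | succ h1 h2 ih =>
      have hu := h1.le
      have hw := h2.lt
      refine .succ (ih fun x hx1 hx2 => hag x hx1 (by omega)) ?_
      have he : e' _ = e _ := hag _ (by omega) hw
      rw [he]
      exact h2.congr fun x hx1 hx2 => hag x (by omega) hx2

theorem Steps.trans {e : ℕ → ℕ} {t a u b w : ℕ} (h1 : Steps e t a u)
    (h2 : Steps e u b w) : Steps e t (a + b) w := by
  induction h2 with
  | refl => exact h1
  | succ h2' hb ih => exact .succ ih hb

theorem blockEnd_iff_steps {e : ℕ → ℕ} {t v u : ℕ} :
    BlockEnd e t v u ↔ Steps e (t+1) v u := by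
  constructor
  · intro h
    induction h with
    | zero t => exact .refl _
    | succ h1 h2 ih1 ih2 => exact .succ ih1 h2
  · intro h
    induction h with
    | refl => exact .zero _
    | succ h1 h2 ih => exact .succ ih h2

theorem Steps.zeros {e : ℕ → ℕ} {t c : ℕ} (h : ∀ x, t ≤ x → x < t + c → e x = 0) :
    Steps e t c (t + c) := by
  induction c with
  | zero => exact .refl t
  | succ c ih =>
      have hstep : BlockEnd e (t + c) (e (t + c)) (t + (c+1)) := by
        have h0 : e (t + c) = 0 := h _ (by omega) (by omega)
        rw [h0]
        exact BlockEnd.zero _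
      exact .succ (ih fun x h1 h2 => h x h1 (by omega)) hstep

theorem spineC_length (L : BinTree) : (spineC L).length = spineDepth L := by
  induction L with
  | leaf => rfl
  | node A B ihA ihB => simp [spineC, spineDepth, ihA]

theorem numNodes_spine (L : BinTree) :
    numNodes L = ((spineC L).map numNodes).sum + spineDepth L := by
  induction L with
  | leaf => rfl
  | node A B ihA ihB => simp [spineC, spineDepth, numNodes, ihA]; omega

theorem lexps_length_spine (L : BinTree) :
    (lexps L).length = ((spineC L).flatMap lexps).length + 1 := by
  rw [lexps_spine]; simp

/-- Walking the blocks of a list of trees laid out by `lexps`. -/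
theorem walk_list : ∀ (N : ℕ) (Cs : List BinTree) (t : ℕ) (e : ℕ → ℕ),
    ((Cs.map numNodes).sum + Cs.length) ≤ N →
    (∀ r, r < (Cs.flatMap lexps).length → e (t + r) = (Cs.flatMap lexps).getD r 0) →
    Steps e t Cs.length (t + (Cs.flatMap lexps).length) := by
  intro N
  induction N with
  | zero =>
      intro Cs t e hN hag
      have : Cs = [] := by
        cases Cs with
        | nil => rfl
        | cons B Cs' => simp at hN
      subst this
      exact .refl t
  | succ N ih =>
      intro Cs t e hN hag
      cases Cs with
      | nil => exact .refl t
      | cons B Cs' =>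
          have hlB : 0 < (lexps B).length := by
            rw [lexps_length]; rw [numLeaves_eq]; omega
          have hflat : (B :: Cs').flatMap lexps = lexps B ++ Cs'.flatMap lexps := by
            simp
          -- head value
          have het : e t = spineDepth B := by
            have := hag 0 (by simp [hflat]; omega)
            rw [Nat.add_zero] at this
            rw [this, hflat]
            rw [List.getD_append _ _ _ _ (by omega)]
            rw [lexps_spine]
            rfl
          -- first block
          have hinner : Steps e (t+1) (spineC B).length
              ((t+1) + ((spineC B).flatMap lexps).length) := by
            refine ih (spineC B) (t+1) e ?_ ?_
            · have h1 := numNodes_spine B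
              have h2 := spineC_length B
              simp [numNodes] at hN ⊢
              omega
            · intro r hr
              have hr' : r + 1 < (lexps B).length := by
                rw [lexps_length_spine]; omega
              have := hag (r+1) (by rw [hflat]; simp; omega)
              have harr : t + 1 + r = t + (r + 1) := by omega
              rw [harr, this, hflat, List.getD_append _ _ _ _ (by omega)]
              rw [lexps_spine]
              simp [List.getD]
          have hfirst : BlockEnd e t (e t) (t + (lexps B).length) := by
            rw [blockEnd_iff_steps, het, ← spineC_length]
            have : t + (lexps B).length = (t+1) + ((spineC B).flatMap lexps).length := by
              rw [lexps_length_spine]; omega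
            rw [this]
            exact hinner
          -- rest
          have hrest : Steps e (t + (lexps B).length) Cs'.length
              ((t + (lexps B).length) + (Cs'.flatMap lexps).length) := by
            refine ih Cs' (t + (lexps B).length) e ?_ ?_
            · simp [numNodes] at hN ⊢; omega
            · intro r hr
              have hrlen : (lexps B).length + r < ((B :: Cs').flatMap lexps).length := by
                rw [hflat]; rw [List.length_append]; omega
              have := hag ((lexps B).length + r) hrlen
              have harr : t + (lexps B).length + r = t + ((lexps B).length + r) := by omega
              rw [harr, this, hflat, List.getD_append_right _ _ _ _ (by omega)]
              congr 1
              omega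
          have hone : Steps e t 1 (t + (lexps B).length) := .succ (.refl t) hfirst
          have := hone.trans hrest
          have harr : (1 + Cs'.length) = (B :: Cs').length := by simp; omega
          rw [harr] at this
          have harr2 : t + ((B :: Cs').flatMap lexps).length
              = t + (lexps B).length + (Cs'.flatMap lexps).length := by
            rw [hflat, List.length_append]; omega
          rw [harr2]
          exact this
      
end BinTree

namespace BinTree

/-- end position of the `k`-block window in the block list `Bs` (positions start at 1). -/
def qval (Bs : List BinTree) (k : ℕ) : ℕ :=
  1 + ((Bs.take k).flatMap lexps).length + (k - Bs.length)

theorem qval_ge (Bs : List BinTree) (k : ℕ) : k + 1 ≤ qval Bs k := by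
  unfold qval
  have h1 : ∀ l : List BinTree, l.length ≤ (l.flatMap lexps).length := by
    intro l
    induction l with
    | nil => simp
    | cons B l ih =>
        have : 0 < (lexps B).length := by rw [lexps_length, numLeaves_eq]; omega
        rw [List.flatMap_cons, List.length_append, List.length_cons]
        omega
  have h1' := h1 (Bs.take k)
  have h2 : (Bs.take k).length = min k Bs.length := by simp
  omega

theorem flat_take_prefix (Bs : List BinTree) (k r : ℕ)
    (hr : r < ((Bs.take k).flatMap lexps).length) :
    (Bs.flatMap lexps).getD r 0 = ((Bs.take k).flatMap lexps).getD r 0 := by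
  conv_lhs => rw [← List.take_append_drop k Bs]
  rw [List.flatMap_append, List.getD_append _ _ _ _ hr]

/-- The window walk on a valid sequence lands at `qval`. -/
theorem valid_steps {e : ℕ → ℕ} {s : ℕ} {Bs : List BinTree}
    (he : ∀ k, e k = (s :: Bs.flatMap lexps).getD k 0) (k : ℕ) :
    Steps e 1 k (qval Bs k) := by
  have hewalk : ∀ r, r < ((Bs.take k).flatMap lexps).length →
      e (1 + r) = ((Bs.take k).flatMap lexps).getD r 0 := by
    intro r hr
    rw [he (1 + r)]
    have : (s :: Bs.flatMap lexps).getD (1 + r) 0 = (Bs.flatMap lexps).getD r 0 := by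
      have : 1 + r = r + 1 := by omega
      rw [this]
      exact List.getD_cons_succ ..
    rw [this]
    exact flat_take_prefix Bs k r hr
  have h1 : Steps e 1 (Bs.take k).length (1 + ((Bs.take k).flatMap lexps).length) :=
    walk_list _ (Bs.take k) 1 e le_rfl hewalk
  have hzeros : ∀ x, 1 + ((Bs.take k).flatMap lexps).length ≤ x →
      x < 1 + ((Bs.take k).flatMap lexps).length + (k - (Bs.take k).length) → e x = 0 := by
    intro x hx1 hx2
    -- in this regime `take k Bs = Bs`, so `x` is beyond the whole list
    have hk : Bs.length ≤ k := by
      by_contra hlt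
      push_neg at hlt
      have : (Bs.take k).length = k := by simp; omega
      omega
    have htake : Bs.take k = Bs := List.take_of_length_le (by omega)
    rw [he x]
    rw [htake] at hx1
    have hlen : (s :: Bs.flatMap lexps).length = (Bs.flatMap lexps).length + 1 := rfl
    exact List.getD_eq_default _ _ (by omega)
  have h2 : Steps e (1 + ((Bs.take k).flatMap lexps).length) (k - (Bs.take k).length)
      (1 + ((Bs.take k).flatMap lexps).length + (k - (Bs.take k).length)) := by
    refine Steps.zeros ?_
    intro x hx1 hx2
    exact hzeros x hx1 (by simpa using hx2)
  have := h1.trans h2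
  have harr : (Bs.take k).length + (k - (Bs.take k).length) = k := by
    have : (Bs.take k).length = min k Bs.length := by simp
    omega
  rw [harr] at this
  have harr2 : qval Bs k = 1 + ((Bs.take k).flatMap lexps).length + (k - (Bs.take k).length) := by
    unfold qval
    have : (Bs.take k).length = min k Bs.length := by simp
    omega
  rw [harr2]
  exact this

theorem valid_win {e : ℕ → ℕ} (hv : Valid e) (k : ℕ) : ∃ q, Steps e 1 k q := by
  obtain ⟨s, Bs, he⟩ := hv
  exact ⟨qval Bs k, valid_steps he k⟩

/-- position `q-1` (the last position of the window) carries a zero on valid sequences. -/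
theorem valid_reg {e : ℕ → ℕ} {k q : ℕ} (hv : Valid e) (hs : Steps e 1 k q)
    (hq : 2 ≤ q) : e (q - 1) = 0 := by
  obtain ⟨s, Bs, he⟩ := hv
  have hq' : q = qval Bs k := hs.det (valid_steps he k)
  subst hq'
  rcases Nat.eq_zero_or_pos k with hk0 | hkpos
  · subst hk0; simp [qval] at hq
  rw [he]
  rcases le_or_gt k Bs.length with hk | hk
  · -- q - 1 = length of flat (take k); last entry of lexps of block k-1
    have hq1 : qval Bs k = 1 + ((Bs.take k).flatMap lexps).length := by
      unfold qval; omega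
    have h1 : k - 1 < Bs.length := by omega
    set B' : BinTree := Bs[k-1] with hB'
    have htk : Bs.take k = Bs.take (k-1) ++ [B'] := by
      have hk1 : k = (k-1) + 1 := by omega
      rw [hk1, List.take_succ, List.getElem?_eq_getElem h1]
      rfl
    obtain ⟨l0, hl0⟩ := lexps_concat B'
    have hflat : (Bs.take k).flatMap lexps
        = ((Bs.take (k-1)).flatMap lexps ++ l0) ++ [0] := by
      rw [htk]; simp [hl0]
    have hpos : qval Bs k - 1 ≥ 1 := by omega
    have : (s :: Bs.flatMap lexps).getD (qval Bs k - 1) 0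
        = (Bs.flatMap lexps).getD (qval Bs k - 2) 0 := by
      have h2 : qval Bs k - 1 = (qval Bs k - 2) + 1 := by omega
      rw [h2]
      exact List.getD_cons_succ ..
    rw [this]
    have hidx : qval Bs k - 2 = ((Bs.take (k-1)).flatMap lexps ++ l0).length := by
      rw [hq1]
      have : ((Bs.take k).flatMap lexps).length
          = ((Bs.take (k-1)).flatMap lexps ++ l0).length + 1 := by
        rw [hflat]; simp; omega
      omega
    have hlt : qval Bs k - 2 < ((Bs.take k).flatMap lexps).length := by
      rw [hidx, hflat]; simp
    rw [flat_take_prefix Bs k _ hlt, hflat, hidx]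
    rw [List.getD_append_right _ _ _ _ le_rfl]
    simp
  · -- beyond the list: default zero
    have : (s :: Bs.flatMap lexps).length ≤ qval Bs k - 1 := by
      unfold qval
      have htake : Bs.take k = Bs := List.take_of_length_le (by omega)
      rw [htake]
      simp
      omega
    exact List.getD_eq_default _ _ this

end BinTree

namespace BinTree

/-- rebuild a tree from its spine data -/
def rebuild (l : List BinTree) : BinTree := l.foldl node leaf

theorem spineC_foldl (l : List BinTree) (A : BinTree) :
    spineC (l.foldl node A) = spineC A ++ l := by
  induction l generalizing A with
  | nil => simp
  | cons C l ih => simp [List.foldl_cons, ih, spineC]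

theorem spineDepth_foldl (l : List BinTree) (A : BinTree) :
    spineDepth (l.foldl node A) = spineDepth A + l.length := by
  induction l generalizing A with
  | nil => simp
  | cons C l ih => simp [List.foldl_cons, ih, spineDepth]; omega

theorem numNodes_foldl (l : List BinTree) (A : BinTree) :
    numNodes (l.foldl node A) = numNodes A + (l.map numNodes).sum + l.length := by
  induction l generalizing A with
  | nil => simp
  | cons C l ih => simp [List.foldl_cons, ih, numNodes]; omega

theorem spineC_rebuild (l : List BinTree) : spineC (rebuild l) = l := by
  simp [rebuild, spineC_foldl, spineC]

theorem spineDepth_rebuild (l : List BinTree) : spineDepth (rebuild l) = l.length := by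
  simp [rebuild, spineDepth_foldl, spineDepth]

theorem numNodes_rebuild (l : List BinTree) :
    numNodes (rebuild l) = (l.map numNodes).sum + l.length := by
  simp [rebuild, numNodes_foldl, numNodes]

theorem lexps_rebuild (l : List BinTree) :
    lexps (rebuild l) = l.length :: l.flatMap lexps := by
  rw [lexps_spine, spineC_rebuild, spineDepth_rebuild]

theorem spineDepth_eq_zero {B : BinTree} (h : spineDepth B = 0) : B = leaf := by
  cases B with
  | leaf => rfl
  | node A C => simp [spineDepth] at h

theorem lexps_getD_zero (B : BinTree) : (lexps B).getD 0 0 = spineDepth B := by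
  rw [lexps_spine]; rfl

theorem numNodes_spineC (B : BinTree) :
    ((spineC B).map numNodes).sum + spineDepth B = numNodes B := by
  have := numNodes_spine B; omega

/-- Deleting an exposed caret inside the leaf-exponent stream of a block list. -/
theorem fdel : ∀ (N : ℕ) (Cs : List BinTree) (r : ℕ),
    (Cs.map numNodes).sum + Cs.length ≤ N →
    (Cs.flatMap lexps).getD r 0 > 0 → (Cs.flatMap lexps).getD (r+1) 0 = 0 →
    ∃ Cs' : List BinTree,
      Cs'.flatMap lexps
        = (Cs.flatMap lexps).take r
            ++ ((Cs.flatMap lexps).getD r 0 - 1) :: (Cs.flatMap lexps).drop (r+2)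
      ∧ Cs'.length = Cs.length
      ∧ ((Cs'.map numNodes).sum) + 1 = (Cs.map numNodes).sum
      ∧ ∀ k, ((Cs'.take k).flatMap lexps).length
          = ((Cs.take k).flatMap lexps).length
            - (if r < ((Cs.take k).flatMap lexps).length then 1 else 0) := by
  intro N
  induction N with
  | zero =>
      intro Cs r hN hpos hz
      have : Cs = [] := by cases Cs with
        | nil => rfl
        | cons B Cs'' => simp at hN
      subst this
      simp [List.getD] at hpos
  | succ N ih =>
      intro Cs r hN hpos hz
      cases Cs with
      | nil => simp [List.getD] at hpos
      | cons B Cs'' =>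
          have hflat : (B :: Cs'').flatMap lexps = lexps B ++ Cs''.flatMap lexps := by simp
          rcases lt_or_ge r (lexps B).length with hrl | hrl
          · -- inside block B
            have hval : ((B :: Cs'').flatMap lexps).getD r 0 = (lexps B).getD r 0 := by
              rw [hflat]; exact List.getD_append _ _ _ _ hrl
            have hrl1 : r + 1 < (lexps B).length := by
              rcases lt_or_ge (r+1) (lexps B).length with h | h
              · exact h
              · exfalso
                have hreq : r = (lexps B).length - 1 := by omega
                obtain ⟨l0, hl0⟩ := lexps_concat B
                rw [hval, hreq, hl0] at hpos
                have hlen0 : (l0 ++ [0]).length - 1 = l0.length := by simp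
                rw [hlen0, List.getD_append_right _ _ _ _ le_rfl] at hpos
                simp at hpos
            have hzin : (lexps B).getD (r+1) 0 = 0 := by
              rw [hflat, List.getD_append _ _ _ _ hrl1] at hz
              exact hz
            -- split on r = 0 or not
            have hBspine : lexps B = spineDepth B :: (spineC B).flatMap lexps := lexps_spine B
            rcases Nat.eq_zero_or_pos r with hr0 | hrpos
            · -- delete the bottom spine caret of B
              subst hr0
              have hd : 0 < spineDepth B := by
                rw [hval, hBspine] at hpos
                simpa using hpos
              obtain ⟨C0, Ds', hDs⟩ : ∃ C0 Ds', spineC B = C0 :: Ds' := by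
                cases hsc : spineC B with
                | nil => exfalso; have := spineC_length B; rw [hsc] at this; simp at this; omega
                | cons C0 Ds' => exact ⟨C0, Ds', rfl⟩
              have hC0 : C0 = leaf := by
                apply spineDepth_eq_zero
                have h1 : (lexps B).getD 1 0 = spineDepth C0 := by
                  rw [hBspine, List.getD_cons_succ, hDs]
                  have : (C0 :: Ds').flatMap lexps = lexps C0 ++ Ds'.flatMap lexps := by simp
                  rw [this]
                  rw [List.getD_append _ _ _ _ (by rw [lexps_length, numLeaves_eq]; omega)]
                  exact lexps_getD_zero C0
                rw [h1] at hzin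
                exact hzin
              refine ⟨rebuild Ds' :: Cs'', ?_, by simp, ?_, ?_⟩
              · have h1 : (rebuild Ds' :: Cs'').flatMap lexps
                    = (Ds'.length :: Ds'.flatMap lexps) ++ Cs''.flatMap lexps := by
                  simp [lexps_rebuild]
                have hlenDs : Ds'.length = spineDepth B - 1 := by
                  have := spineC_length B; rw [hDs] at this; simp at this; omega
                have hfl2 : (spineC B).flatMap lexps = 0 :: Ds'.flatMap lexps := by
                  rw [hDs, hC0]; simp [lexps]
                have hlex2 : lexps B = spineDepth B :: 0 :: Ds'.flatMap lexps := by
                  rw [hBspine, hfl2]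
                rw [h1, hflat, hlex2]
                have hg0 : ((spineDepth B :: 0 :: Ds'.flatMap lexps) ++ Cs''.flatMap lexps).getD 0 0
                    = spineDepth B := rfl
                rw [hg0]
                have hdrop2 : ((spineDepth B :: 0 :: Ds'.flatMap lexps) ++ Cs''.flatMap lexps).drop 2
                    = Ds'.flatMap lexps ++ Cs''.flatMap lexps := by simp
                rw [hdrop2]
                simp [hlenDs]
              · have h1 : numNodes (rebuild Ds') + 1 = numNodes B := by
                  rw [numNodes_rebuild]
                  have h2 := numNodes_spineC B
                  rw [hDs, hC0] at h2
                  have h3 := spineC_length B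
                  rw [hDs] at h3
                  simp [numNodes] at h2 h3
                  omega
                simp
                omega
              · intro k
                cases k with
                | zero => simp
                | succ s =>
                    have h1 : ((rebuild Ds' :: Cs'').take (s+1)).flatMap lexps
                        = lexps (rebuild Ds') ++ (Cs''.take s).flatMap lexps := by simp
                    have h2 : ((B :: Cs'').take (s+1)).flatMap lexps
                        = lexps B ++ (Cs''.take s).flatMap lexps := by simp
                    rw [h1, h2, List.length_append, List.length_append]
                    have h3 : (lexps (rebuild Ds')).length + 1 = (lexps B).length := by
                      rw [lexps_rebuild, hBspine, hDs, hC0]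
                      simp [lexps]
                    rw [if_pos (by omega)]
                    omega
            · -- delete inside a spine component of B
              have hmeas0 : ((spineC B).map numNodes).sum + (spineC B).length ≤ N := by
                have h2 := numNodes_spineC B
                have h3 := spineC_length B
                simp only [List.map_cons, List.sum_cons, List.length_cons] at hN
                omega
              have hpos0 : ((spineC B).flatMap lexps).getD (r-1) 0 > 0 := by
                have hgB : (lexps B).getD r 0 = ((spineC B).flatMap lexps).getD (r-1) 0 := by
                  rw [hBspine, show r = (r-1)+1 by omega]; exact List.getD_cons_succ ..
                rw [hval, hgB] at hpos
                exact hpos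
              have hz0 : ((spineC B).flatMap lexps).getD ((r-1)+1) 0 = 0 := by
                have hgB : (lexps B).getD (r+1) 0 = ((spineC B).flatMap lexps).getD r 0 := by
                  rw [hBspine]; exact List.getD_cons_succ ..
                rw [hgB] at hzin
                rw [show r - 1 + 1 = r by omega]
                exact hzin
              obtain ⟨Ds', hfl, hlen, hmeas, hq⟩ := ih (spineC B) (r - 1) hmeas0 hpos0 hz0
              have hlenDs : Ds'.length = spineDepth B := by
                rw [hlen, spineC_length]
              have hlexB' : lexps (rebuild Ds') = spineDepth B :: Ds'.flatMap lexps := by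
                rw [lexps_rebuild, hlenDs]
              refine ⟨rebuild Ds' :: Cs'', ?_, by simp, ?_, ?_⟩
              · have h1 : (rebuild Ds' :: Cs'').flatMap lexps
                    = (spineDepth B :: Ds'.flatMap lexps) ++ Cs''.flatMap lexps := by
                  simp [hlexB']
                have hr1 : r = (r - 1) + 1 := by omega
                have hlB : (lexps B).length = ((spineC B).flatMap lexps).length + 1 :=
                  lexps_length_spine B
                have hgB : ((B :: Cs'').flatMap lexps).getD r 0
                    = ((spineC B).flatMap lexps).getD (r-1) 0 := by
                  rw [hval, hBspine, hr1]; exact List.getD_cons_succ ..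
                have htake : ((B :: Cs'').flatMap lexps).take r
                    = spineDepth B :: ((spineC B).flatMap lexps).take (r-1) := by
                  rw [hflat, List.take_append]
                  have h4 : (lexps B).take r = spineDepth B :: ((spineC B).flatMap lexps).take (r-1) := by
                    rw [hBspine, hr1]
                    rfl
                  rw [h4]
                  have : r - (lexps B).length = 0 := by omega
                  rw [this]
                  simp
                have hdrop : ((B :: Cs'').flatMap lexps).drop (r+2)
                    = ((spineC B).flatMap lexps).drop (r+1) ++ Cs''.flatMap lexps := by
                  rw [hflat, List.drop_append]
                  have h4 : (lexps B).drop (r+2) = ((spineC B).flatMap lexps).drop (r+1) := by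
                    rw [hBspine]
                    have : r + 2 = (r+1) + 1 := by omega
                    rw [this]
                    rfl
                  rw [h4]
                  have : r + 2 - (lexps B).length = 0 := by omega
                  rw [this]
                  simp
                rw [h1, hfl, htake, hdrop, hgB]
                have harr : r - 1 + 2 = r + 1 := by omega
                rw [harr]
                simp
              · have h1 : numNodes (rebuild Ds') + 1 = numNodes B := by
                  rw [numNodes_rebuild]
                  have h2 := numNodes_spineC B
                  have h3 := spineC_length B
                  have h4 : (Ds'.map numNodes).sum + 1 = ((spineC B).map numNodes).sum := hmeas
                  omega
                simp
                omega
              · intro k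
                cases k with
                | zero => simp
                | succ s =>
                    have h1 : ((rebuild Ds' :: Cs'').take (s+1)).flatMap lexps
                        = lexps (rebuild Ds') ++ (Cs''.take s).flatMap lexps := by simp
                    have h2 : ((B :: Cs'').take (s+1)).flatMap lexps
                        = lexps B ++ (Cs''.take s).flatMap lexps := by simp
                    rw [h1, h2, List.length_append, List.length_append]
                    have hS : (lexps B).length = ((spineC B).flatMap lexps).length + 1 :=
                      lexps_length_spine B
                    have hfl_len := congrArg List.length hfl
                    rw [List.length_append, List.length_cons, List.length_take,
                      List.length_drop] at hfl_len
                    have h3 : (lexps (rebuild Ds')).length + 1 = (lexps B).length := by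
                      rw [hlexB', List.length_cons]
                      omega
                    have hcond : r < (lexps B).length + ((List.take s Cs'').flatMap lexps).length := by
                      omega
                    simp only [if_pos hcond]
                    omega
          · -- inside the rest
            have hge1 : ((B :: Cs'').flatMap lexps).getD r 0
                = (Cs''.flatMap lexps).getD (r - (lexps B).length) 0 := by
              rw [hflat]; exact List.getD_append_right _ _ _ _ hrl
            have hge2 : ((B :: Cs'').flatMap lexps).getD (r+1) 0
                = (Cs''.flatMap lexps).getD ((r - (lexps B).length) + 1) 0 := by
              rw [hflat, List.getD_append_right _ _ _ _ (by omega)]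
              congr 1
              omega
            rw [hge1] at hpos
            rw [hge2] at hz
            obtain ⟨Cs''', hfl, hlen, hmeas, hq⟩ :=
              ih Cs'' (r - (lexps B).length)
                (by simp only [List.map_cons, List.sum_cons, List.length_cons] at hN; omega) hpos hz
            refine ⟨B :: Cs''', ?_, by simp [hlen], by simp at hmeas ⊢; omega, ?_⟩
            · have h1 : (B :: Cs''').flatMap lexps = lexps B ++ Cs'''.flatMap lexps := by simp
              have hgr : ((B :: Cs'').flatMap lexps).getD r 0
                  = (Cs''.flatMap lexps).getD (r - (lexps B).length) 0 := hge1
              rw [h1, hfl, hflat, List.take_append, List.drop_append]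
              have ht : (lexps B).take r = lexps B := List.take_of_length_le (by omega)
              have hd : (lexps B).drop (r+2) = [] := List.drop_eq_nil_of_le (by omega)
              rw [ht, hd]
              rw [hflat] at hgr
              rw [hgr]
              have hidx : r + 2 - (lexps B).length = r - (lexps B).length + 2 := by omega
              rw [hidx]
              simp
            · intro k
              cases k with
              | zero => simp
              | succ s =>
                  have h1 : ((B :: Cs''').take (s+1)).flatMap lexps
                      = lexps B ++ (Cs'''.take s).flatMap lexps := by simp
                  have h2 : ((B :: Cs'').take (s+1)).flatMap lexps
                      = lexps B ++ (Cs''.take s).flatMap lexps := by simp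
                  rw [h1, h2]
                  rw [List.length_append, List.length_append, hq s]
                  rcases lt_or_ge (r - (lexps B).length) ((Cs''.take s).flatMap lexps).length with h | h
                  · rw [if_pos h, if_pos (by omega)]
                    omega
                  · rw [if_neg (by omega), if_neg (by omega)]
                    omega

end BinTree

namespace BinTree

theorem getD_take' (l : List ℕ) (n m : ℕ) (h : m < n) : (l.take n).getD m 0 = l.getD m 0 := by
  simp [List.getD_eq_getElem?_getD, List.getElem?_take, h]

theorem getD_drop' (l : List ℕ) (n m : ℕ) : (l.drop n).getD m 0 = l.getD (n + m) 0 := by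
  simp [List.getD_eq_getElem?_getD, List.getElem?_drop]

theorem flat_concat {Bs : List BinTree} (h : Bs ≠ []) :
    ∃ pre, Bs.flatMap lexps = pre ++ [0] := by
  induction Bs with
  | nil => exact absurd rfl h
  | cons B Bs' ih =>
      cases Bs' with
      | nil =>
          obtain ⟨l0, hl0⟩ := lexps_concat B
          exact ⟨l0, by simp [hl0]⟩
      | cons C Cs =>
          obtain ⟨pre, hpre⟩ := ih (by simp)
          exact ⟨lexps B ++ pre, by simp [hpre]⟩

theorem flat_last_zero {Bs : List BinTree} {r : ℕ}
    (h : r + 1 = (Bs.flatMap lexps).length) : (Bs.flatMap lexps).getD r 0 = 0 := by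
  have hne : Bs ≠ [] := by
    intro h'
    subst h'
    simp at h
  obtain ⟨pre, hpre⟩ := flat_concat hne
  rw [hpre] at h ⊢
  simp at h
  rw [List.getD_append_right _ _ _ _ (by omega)]
  have : r - pre.length = 0 := by omega
  rw [this]
  rfl

/-- Key deletion lemma: a partial-reduction step on a valid sequence preserves
validity and moves the window end predictably. -/
theorem shiftDown_side {e : ℕ → ℕ} {i : ℕ} (hv : Valid e) (hi : 1 ≤ i)
    (hpos : 0 < e i) (hz : e (i+1) = 0) :
    Valid (shiftDown i e) ∧
    ∀ k q, Steps e 1 k q →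
      (q ≤ i ∧ Steps (shiftDown i e) 1 k q) ∨
      (i + 2 ≤ q ∧ Steps (shiftDown i e) 1 k (q - 1)) := by
  obtain ⟨s, Bs, he⟩ := hv
  set F := Bs.flatMap lexps with hF
  set r := i - 1 with hr
  have hFlen : (Bs.flatMap lexps).length = F.length := rfl
  have hir : i = r + 1 := by omega
  have heF : ∀ x, e (x + 1) = F.getD x 0 := by
    intro x
    rw [he]
    exact List.getD_cons_succ ..
  have hposF : 0 < F.getD r 0 := by rw [← heF, ← hir]; exact hpos
  have hzF : F.getD (r+1) 0 = 0 := by rw [← heF, ← hir]; exact hz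
  have hrF : r < F.length := by
    by_contra hc
    push_neg at hc
    rw [List.getD_eq_default _ _ hc] at hposF
    omega
  obtain ⟨Bs', hfl, hlen, hmeas, hq⟩ := fdel _ Bs r le_rfl hposF hzF

  -- the new sequence is valid with data (s, Bs')
  have hnew : ∀ x, shiftDown i e x = (s :: Bs'.flatMap lexps).getD x 0 := by
    intro x
    rcases Nat.lt_trichotomy x i with hx | hx | hx
    · -- x < i
      rw [shiftDown, if_pos hx]
      cases x with
      | zero => rw [he]; rfl
      | succ y =>
          rw [heF y]
          have h1 : (s :: Bs'.flatMap lexps).getD (y+1) 0 = (Bs'.flatMap lexps).getD y 0 :=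
            List.getD_cons_succ ..
          rw [h1, hfl]
          have hy : y < r := by omega
          rw [List.getD_append _ _ _ _ (by rw [List.length_take]; omega)]
          exact (getD_take' _ _ _ hy).symm
    · -- x = i
      subst hx
      rw [shiftDown, if_neg (by omega), if_pos rfl]
      rw [hir, heF r]
      have h1 : (s :: Bs'.flatMap lexps).getD (r+1) 0 = (Bs'.flatMap lexps).getD r 0 :=
        List.getD_cons_succ ..
      rw [← hir, hir, h1, hfl]
      rw [List.getD_append_right _ _ _ _ (by rw [List.length_take]; omega)]
      have : r - (F.take r).length = 0 := by rw [List.length_take]; omega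
      rw [this]
      rfl
    · -- x > i
      rw [shiftDown, if_neg (by omega), if_neg (by omega)]
      have hx1 : x = (x - 1) + 1 := by omega
      rw [show x + 1 = (x - 1 + 1) + 1 by omega, heF]
      have h1 : (s :: Bs'.flatMap lexps).getD x 0 = (Bs'.flatMap lexps).getD (x - 1) 0 := by
        rw [hx1]
        exact List.getD_cons_succ ..
      rw [h1, hfl]
      rw [List.getD_append_right _ _ _ _ (by rw [List.length_take]; omega)]
      have h2 : x - 1 - (F.take r).length = (x - 1 - r - 1) + 1 := by
        rw [List.length_take]; omega
      rw [h2, List.getD_cons_succ, getD_drop']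
      congr 1
      omega
  constructor
  · exact ⟨s, Bs', hnew⟩
  · intro k q hsq
    have hq0 : q = qval Bs k := hsq.det (valid_steps he k)
    have hsq' : Steps (shiftDown i e) 1 k (qval Bs' k) := valid_steps hnew k
    -- compare qval
    have hcum : ((Bs'.take k).flatMap lexps).length
        = ((Bs.take k).flatMap lexps).length
          - (if r < ((Bs.take k).flatMap lexps).length then 1 else 0) := hq k
    by_cases hc : r < ((Bs.take k).flatMap lexps).length
    · -- deletion inside the window: q decreases
      right
      rw [if_pos hc] at hcum
      -- r + 2 ≤ cum : r is not the last position of the window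
      have hr2 : r + 2 ≤ ((Bs.take k).flatMap lexps).length := by
        rcases lt_or_ge (r+1) ((Bs.take k).flatMap lexps).length with h | h
        · omega
        · exfalso
          have hreq : r + 1 = ((Bs.take k).flatMap lexps).length := by omega
          have : ((Bs.take k).flatMap lexps).getD r 0 = 0 := flat_last_zero hreq
          rw [← flat_take_prefix Bs k r hc] at this
          rw [← hF] at this
          omega
      have hqv : qval Bs' k = q - 1 := by
        rw [hq0]
        unfold qval
        rw [hcum, hlen]
        omega
      have hiq : i + 2 ≤ qval Bs k := by
        unfold qval
        omega
      refine ⟨by omega, ?_⟩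
      rw [← hqv]
      exact hsq'
    · -- deletion beyond the window: q unchanged
      left
      rw [if_neg hc] at hcum
      push_neg at hc
      -- here the tail part `k - Bs.length` must vanish
      have hextra : k ≤ Bs.length := by
        by_contra hk
        push_neg at hk
        have : Bs.take k = Bs := List.take_of_length_le (by omega)
        rw [this] at hc
        rw [← hF] at hc
        omega
      have hqv : qval Bs' k = qval Bs k := by
        unfold qval
        rw [hcum, hlen]
        omega
      have hle : qval Bs k ≤ i := by
        unfold qval
        have : k - Bs.length = 0 := by omega
        omega
      refine ⟨by omega, ?_⟩
      rw [← hq0] at hqv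
      rw [← hqv]
      exact hsq'

end BinTree

namespace BinTree

/-- The masked window of a sequence: equal walks of `m-1` blocks from position 1
and agreement of values on the window. -/
def MaskEq (m : ℕ) (f e : ℕ → ℕ) : Prop :=
  ∃ q, Steps f 1 (m-1) q ∧ Steps e 1 (m-1) q ∧ ∀ t, 0 < t → t < q → f t = e t

theorem MaskEq.symm {m : ℕ} {f e : ℕ → ℕ} (h : MaskEq m f e) : MaskEq m e f := by
  obtain ⟨q, h1, h2, h3⟩ := h
  exact ⟨q, h2, h1, fun t ht1 ht2 => (h3 t ht1 ht2).symm⟩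

theorem maskEq_refl {m : ℕ} {e : ℕ → ℕ} (hv : Valid e) : MaskEq m e e := by
  obtain ⟨q, hq⟩ := valid_win hv (m-1)
  exact ⟨q, hq, hq, fun _ _ _ => rfl⟩

/-- A common partial-reduction step preserves `MaskEq` (in both directions). -/
theorem pred_maskeq {m : ℕ} {f e : ℕ → ℕ} {i : ℕ}
    (hvf : Valid f) (hve : Valid e) (hi : 0 < i)
    (hpf : 0 < f i) (hpe : 0 < e i) (hzf : f (i+1) = 0) (hze : e (i+1) = 0) :
    MaskEq m (shiftDown i f) (shiftDown i e) ↔ MaskEq m f e := by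
  obtain ⟨hvf', hdf⟩ := shiftDown_side hvf hi hpf hzf
  obtain ⟨hve', hde⟩ := shiftDown_side hve hi hpe hze
  obtain ⟨Qf, hQf⟩ := valid_win hvf (m-1)
  obtain ⟨Qe, hQe⟩ := valid_win hve (m-1)
  have hsf : ∀ t, t < i → shiftDown i f t = f t := fun t ht => by
    rw [shiftDown, if_pos ht]
  have hsfi : shiftDown i f i = f i - 1 := by rw [shiftDown, if_neg (by omega), if_pos rfl]
  have hsft : ∀ t, i < t → shiftDown i f t = f (t+1) := fun t ht => by
    rw [shiftDown, if_neg (by omega), if_neg (by omega)]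
  have hse : ∀ t, t < i → shiftDown i e t = e t := fun t ht => by
    rw [shiftDown, if_pos ht]
  have hsei : shiftDown i e i = e i - 1 := by rw [shiftDown, if_neg (by omega), if_pos rfl]
  have hset : ∀ t, i < t → shiftDown i e t = e (t+1) := fun t ht => by
    rw [shiftDown, if_neg (by omega), if_neg (by omega)]
  constructor
  · rintro ⟨q', s1', s2', hag'⟩
    rcases hdf (m-1) Qf hQf with ⟨hQfi, sf'⟩ | ⟨hQfi, sf'⟩ <;>
      rcases hde (m-1) Qe hQe with ⟨hQei, se'⟩ | ⟨hQei, se'⟩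
    · -- both low
      have h1 : q' = Qf := s1'.det sf'
      have h2 : q' = Qe := s2'.det se'
      refine ⟨Qf, hQf, h1 ▸ h2 ▸ hQe, fun t ht1 ht2 => ?_⟩
      have ht3 : t < i := by omega
      rw [← hsf t ht3, ← hse t ht3]
      exact hag' t ht1 (by omega)
    · -- mixed : impossible
      exfalso
      have h1 : q' = Qf := s1'.det sf'
      have h2 : q' = Qe - 1 := s2'.det se'
      omega
    · exfalso
      have h1 : q' = Qf - 1 := s1'.det sf'
      have h2 : q' = Qe := s2'.det se'
      omega
    · -- both high
      have h1 : q' = Qf - 1 := s1'.det sf'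
      have h2 : q' = Qe - 1 := s2'.det se'
      have hQ : Qf = Qe := by omega
      refine ⟨Qf, hQf, hQ ▸ hQe, fun t ht1 ht2 => ?_⟩
      rcases Nat.lt_trichotomy t i with ht | ht | ht
      · rw [← hsf t ht, ← hse t ht]
        exact hag' t ht1 (by omega)
      · subst ht
        have := hag' t ht1 (by omega)
        rw [hsfi, hsei] at this
        omega
      · rcases Nat.eq_or_lt_of_le ht with ht' | ht'
        · rw [← ht']
          rw [hzf, hze]
        · have h3 := hag' (t-1) (by omega) (by omega)
          rw [hsft (t-1) (by omega), hset (t-1) (by omega)] at h3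
          have harr : t - 1 + 1 = t := by omega
          rw [harr] at h3
          exact h3
  · rintro ⟨q, s1, s2, hag⟩
    have h1 : q = Qf := s1.det hQf
    have h2 : q = Qe := s2.det hQe
    rcases hdf (m-1) Qf hQf with ⟨hQfi, sf'⟩ | ⟨hQfi, sf'⟩
    · -- low : window before the deletion point
      have hQei : Qe ≤ i := by omega
      rcases hde (m-1) Qe hQe with ⟨_, se'⟩ | ⟨hcon, _⟩
      · refine ⟨Qf, sf', by rw [← h1, h2] at *; exact se', fun t ht1 ht2 => ?_⟩
        have ht3 : t < i := by omega
        rw [hsf t ht3, hse t ht3]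
        exact hag t ht1 (by omega)
      · omega
    · -- high : window strictly contains the deletion point
      have hQei : i + 2 ≤ Qe := by omega
      rcases hde (m-1) Qe hQe with ⟨hcon, _⟩ | ⟨_, se'⟩
      · omega
      · refine ⟨Qf - 1, sf', by rw [← h1, h2] at *; exact se', fun t ht1 ht2 => ?_⟩
        rcases Nat.lt_trichotomy t i with ht | ht | ht
        · rw [hsf t ht, hse t ht]
          exact hag t ht1 (by omega)
        · subst ht
          rw [hsfi, hsei, hag t ht1 (by omega)]
        · rw [hsft t ht, hset t ht]
          exact hag (t+1) (by omega) (by omega)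

/-- window zeros give `MaskEq`. -/
theorem maskeq_of_zeros {m : ℕ} {p q : ℕ → ℕ}
    (hz : ∀ t, 0 < t → t < m → p t = 0 ∧ q t = 0) : MaskEq m p q := by
  have hp : Steps p 1 (m-1) (1 + (m-1)) :=
    Steps.zeros (fun x h1 h2 => (hz x (by omega) (by omega)).1)
  have hq : Steps q 1 (m-1) (1 + (m-1)) :=
    Steps.zeros (fun x h1 h2 => (hz x (by omega) (by omega)).2)
  exact ⟨1 + (m-1), hp, hq, fun t ht1 ht2 => by
    rw [(hz t ht1 (by omega)).1, (hz t ht1 (by omega)).2]⟩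

/-- at an irreducible pair, `MaskEq` forces window zeros. -/
theorem zeros_of_maskeq_irred {m : ℕ} {p q : ℕ → ℕ}
    (hvp : Valid p) (hvq : Valid q)
    (hmax : ∀ a, ¬PRedStep (p, q) a) (hmq : MaskEq m p q) :
    ∀ t, 0 < t → t < m → p t = 0 ∧ q t = 0 := by
  obtain ⟨Q, sp, sq, hag⟩ := hmq
  have hQm : m ≤ Q := by
    have := sp.le
    rcases Nat.eq_zero_or_pos m with hm | hm
    · omega
    · omega
  suffices h : ∀ t, 0 < t → t < Q → p t = 0 by
    intro t ht1 ht2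
    have h1 := h t ht1 (by omega)
    have h2 := hag t ht1 (by omega)
    exact ⟨h1, by omega⟩
  by_contra hc
  push_neg at hc
  obtain ⟨t0, ht01, ht02, ht03⟩ := hc
  set P : ℕ → Prop := fun t => 0 < t ∧ 0 < p t with hP
  have hdec : DecidablePred P := fun t => by
    rw [hP]; infer_instance
  set tstar := Nat.findGreatest P (Q - 1) with ht
  have htP : P tstar := by
    refine Nat.findGreatest_spec (m := t0) (by omega) ?_
    exact ⟨ht01, by omega⟩
  have htle : tstar ≤ Q - 1 := Nat.findGreatest_le _
  have htmax : ∀ u, tstar < u → u ≤ Q - 1 → ¬P u := by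
    intro u h1 h2
    exact Nat.findGreatest_is_greatest h1 h2
  have hpt : 0 < p tstar := htP.2
  have hqt : 0 < q tstar := by
    have := hag tstar htP.1 (by omega)
    omega
  rcases Nat.lt_or_ge (tstar + 1) Q with hlt | hge
  · -- next entry is inside the window hence zero: reducible, contradiction
    have hz1 : p (tstar + 1) = 0 := by
      by_contra hcc
      exact htmax (tstar+1) (by omega) (by omega) ⟨by omega, by omega⟩
    have hz2 : q (tstar + 1) = 0 := by
      have := hag (tstar+1) (by omega) hlt
      omega
    exact hmax _ ⟨tstar, htP.1, hpt, hqt, hz1, hz2, rfl⟩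
  · -- tstar = Q - 1 : contradicts the regularity of valid sequences
    have h1 : tstar = Q - 1 := by omega
    have h2 : p (Q - 1) = 0 := valid_reg hvp sp (by omega)
    rw [h1] at hpt
    omega

/-- transfer of `MaskEq` along a partial-reduction chain. -/
theorem pred_chain {m : ℕ} {a b : (ℕ → ℕ) × (ℕ → ℕ)}
    (h : Relation.ReflTransGen PRedStep a b) (hva1 : Valid a.1) (hva2 : Valid a.2) :
    (Valid b.1 ∧ Valid b.2) ∧ (MaskEq m b.1 b.2 ↔ MaskEq m a.1 a.2) := by
  induction h with
  | refl => exact ⟨⟨hva1, hva2⟩, Iff.rfl⟩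
  | tail h1 hstep ih =>
      obtain ⟨⟨hv1, hv2⟩, hiff⟩ := ih
      obtain ⟨i, hi, hp1, hp2, hz1, hz2, hb⟩ := hstep
      subst hb
      refine ⟨⟨(shiftDown_side hv1 hi hp1 hz1).1, (shiftDown_side hv2 hi hp2 hz2).1⟩, ?_⟩
      rw [← hiff]
      exact pred_maskeq hv1 hv2 hi hp1 hp2 hz1 hz2

end BinTree

namespace BinTree

def expsF (T : BinTree) : ℕ → ℕ := fun x => (exps T).getD x 0

theorem armBlocks_hang (l : List BinTree) : armBlocks (hang l) = l := by
  induction l with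
  | nil => rfl
  | cons B l ih => simp [hang, armBlocks, ih]

theorem rotR_decomp {k : ℕ} {T T' : BinTree} (h : RotR k T T') :
    ∃ l1 A B l2, l1.length = k ∧
      T = hang (l1 ++ node A B :: l2) ∧ T' = hang (l1 ++ A :: B :: l2) := by
  induction h with
  | root A B C =>
      refine ⟨[], A, B, armBlocks C, rfl, ?_, ?_⟩ <;>
        simp [hang, hang_armBlocks]
  | step L h ih =>
      obtain ⟨l1, A, B, l2, hlen, h1, h2⟩ := ih
      exact ⟨L :: l1, A, B, l2, by simp [hlen], by simp [hang, h1], by simp [hang, h2]⟩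

theorem rotR_of_lists (l1 l2 : List BinTree) (A B : BinTree) :
    RotR l1.length (hang (l1 ++ node A B :: l2)) (hang (l1 ++ A :: B :: l2)) := by
  induction l1 with
  | nil => exact RotR.root A B (hang l2)
  | cons L l1 ih => exact RotR.step L ih

theorem rot_exps (l1 l2 : List BinTree) (A B : BinTree) :
    ∃ Y v, exps (hang (l1 ++ node A B :: l2)) = l1.flatMap lexps ++ (v+1) :: Y
      ∧ exps (hang (l1 ++ A :: B :: l2)) = l1.flatMap lexps ++ v :: Y := by
  refine ⟨(spineC A).flatMap lexps ++ lexps B ++ l2.flatMap lexps ++ [0], spineDepth A, ?_, ?_⟩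
  · rw [exps_hang]
    have h1 : lexps (node A B) = (spineDepth A + 1) :: ((spineC A).flatMap lexps ++ lexps B) := by
      rw [lexps_spine]
      simp [spineDepth, spineC]
    simp [h1]
  · rw [exps_hang]
    have h1 : lexps A = spineDepth A :: (spineC A).flatMap lexps := lexps_spine A
    simp [h1]

theorem expsF_hang_data (B0 : BinTree) (l : List BinTree) :
    ∀ x, expsF (hang (B0 :: l)) x
      = (spineDepth B0 :: (spineC B0 ++ l).flatMap lexps).getD x 0 := by
  intro x
  have h0 : hang (B0 :: l) = node B0 (hang l) := rfl
  rw [expsF, h0, exps_node_decomp, armBlocks_hang]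
  have : spineDepth B0 :: ((spineC B0 ++ l).flatMap lexps ++ [0])
      = (spineDepth B0 :: (spineC B0 ++ l).flatMap lexps) ++ [0] := by simp
  rw [this]
  exact getD_concat_zero _ x

theorem flat_take_length_le (l : List BinTree) (n : ℕ) :
    ((l.take n).flatMap lexps).length ≤ (l.flatMap lexps).length := by
  conv_rhs => rw [← List.take_append_drop n l]
  rw [List.flatMap_append, List.length_append]
  omega

/-- the window of a hung tree stays inside the first `1 + |spineC B0| + |rest|` blocks. -/
theorem win_le_hang {m : ℕ} (B0 : BinTree) (rest l2' : List BinTree)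
    (hm : m - 1 ≤ (spineC B0).length + rest.length) {q : ℕ}
    (hq : Steps (expsF (hang (B0 :: (rest ++ l2')))) 1 (m-1) q) :
    q ≤ ((B0 :: rest).flatMap lexps).length := by
  have hdata := expsF_hang_data B0 (rest ++ l2')
  have hW : (spineC B0 ++ (rest ++ l2')) = (spineC B0 ++ rest) ++ l2' := by simp
  have hq2 : q = qval (spineC B0 ++ rest ++ l2') (m-1) := by
    refine hq.det ?_
    have := valid_steps (e := expsF (hang (B0 :: (rest ++ l2'))))
      (s := spineDepth B0) (Bs := spineC B0 ++ (rest ++ l2')) hdata (m-1)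
    rw [hW] at this
    exact this
  rw [hq2]
  unfold qval
  have h1 : ((spineC B0 ++ rest) ++ l2').take (m-1) = (spineC B0 ++ rest).take (m-1) := by
    rw [List.take_append]
    have : m - 1 - (spineC B0 ++ rest).length = 0 := by
      rw [List.length_append]; omega
    rw [this]
    simp
  have h2 : m - 1 - ((spineC B0 ++ rest) ++ l2').length = 0 := by
    rw [List.length_append, List.length_append]; omega
  rw [h1, h2]
  have h3 := flat_take_length_le (spineC B0 ++ rest) (m-1)
  have h4 : ((B0 :: rest).flatMap lexps).length
      = 1 + ((spineC B0 ++ rest).flatMap lexps).length := by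
    have h5 : (B0 :: rest).flatMap lexps = lexps B0 ++ rest.flatMap lexps := by simp
    rw [h5, List.length_append, lexps_length_spine, List.flatMap_append, List.length_append]
    omega
  omega

/-- a right rotation at level `0` or at a level `≥ m` preserves the masked window
(pairing against any fixed sequence). -/
theorem rot_maskeq {m k : ℕ} (hm1 : 1 ≤ m) (hk : k = 0 ∨ m ≤ k) {U U' : BinTree}
    (hrot : RotR k U U') (f : ℕ → ℕ) :
    MaskEq m f (expsF U) ↔ MaskEq m f (expsF U') := by
  obtain ⟨l1, A, B, l2, hlen, hU, hU'⟩ := rotR_decomp hrot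
  obtain ⟨Y, v, hX, hX'⟩ := rot_exps l1 l2 A B
  set p := (l1.flatMap lexps).length with hp
  have heq : ∀ x, x ≠ p → expsF U x = expsF U' x := by
    intro x hx
    rw [expsF, expsF, hU, hU', hX, hX']
    rcases Nat.lt_or_ge x p with h | h
    · rw [List.getD_append _ _ _ _ (by omega), List.getD_append _ _ _ _ (by omega)]
    · have h2 : x - p = (x - p - 1) + 1 := by omega
      rw [List.getD_append_right _ _ _ _ (by omega), List.getD_append_right _ _ _ _ (by omega)]
      rw [← hp, h2, List.getD_cons_succ, List.getD_cons_succ]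
  rcases hk with hk0 | hkm
  · -- level 0 : only position 0 changes
    have hl1 : l1 = [] := List.length_eq_zero_iff.mp (by omega)
    have hp0 : p = 0 := by rw [hp, hl1]; rfl
    constructor
    · rintro ⟨q, s1, s2, hag⟩
      refine ⟨q, s1, s2.congr (fun x hx1 hx2 => (heq x (by omega)).symm), fun t ht1 ht2 => ?_⟩
      rw [← heq t (by omega)]
      exact hag t ht1 ht2
    · rintro ⟨q, s1, s2, hag⟩
      refine ⟨q, s1, s2.congr (fun x hx1 hx2 => heq x (by omega)), fun t ht1 ht2 => ?_⟩
      rw [heq t (by omega)]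
      exact hag t ht1 ht2
  · -- level ≥ m : the window ends before position p
    obtain ⟨B0, rest, hl1⟩ : ∃ B0 rest, l1 = B0 :: rest := by
      cases l1 with
      | nil => exfalso; simp at hlen; omega
      | cons B0 rest => exact ⟨B0, rest, rfl⟩
    have hmrest : m - 1 ≤ (spineC B0).length + rest.length := by
      have : rest.length = k - 1 := by rw [hl1] at hlen; simp at hlen; omega
      omega
    have hUford : U = hang (B0 :: (rest ++ (node A B :: l2))) := by rw [hU, hl1]; simp
    have hU'ford : U' = hang (B0 :: (rest ++ (A :: B :: l2))) := by rw [hU', hl1]; simp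
    have hple : ((B0 :: rest).flatMap lexps).length = p := by rw [hp, hl1]
    constructor
    · rintro ⟨q, s1, s2, hag⟩
      have hqp : q ≤ p := by
        rw [← hple]
        exact win_le_hang B0 rest _ hmrest (by rw [← hUford]; exact s2)
      refine ⟨q, s1, s2.congr (fun x hx1 hx2 => (heq x (by omega)).symm),
        fun t ht1 ht2 => ?_⟩
      rw [← heq t (by omega)]
      exact hag t ht1 ht2
    · rintro ⟨q, s1, s2, hag⟩
      have hqp : q ≤ p := by
        rw [← hple]
        exact win_le_hang B0 rest _ hmrest (by rw [← hU'ford]; exact s2)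
      refine ⟨q, s1, s2.congr (fun x hx1 hx2 => heq x (by omega)),
        fun t ht1 ht2 => ?_⟩
      rw [heq t (by omega)]
      exact hag t ht1 ht2

end BinTree

namespace BinTree

theorem chainLen_trans {r : BinTree → BinTree → Prop} :
    ∀ {n1 : ℕ} {a b c : BinTree}, ChainLen r n1 a b → ∀ {n2}, ChainLen r n2 b c →
      ChainLen r (n1 + n2) a c := by
  intro n1
  induction n1 with
  | zero => intro a b c h n2 h2; rw [show a = b from h]; simpa using h2
  | succ n ih =>
      rintro a b c ⟨U, hU, hrest⟩ n2 h2
      have h3 : ChainLen r (n + n2) U c := ih hrest h2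
      have h4 : ChainLen r ((n + n2) + 1) a c := ⟨U, hU, h3⟩
      rwa [show n + n2 + 1 = n + 1 + n2 by omega] at h4

theorem reach_refl {r : BinTree → BinTree → Prop} (T : BinTree) : Reachable r T T :=
  ⟨0, rfl⟩

theorem reach_single {r : BinTree → BinTree → Prop} {T T' : BinTree} (h : r T T') :
    Reachable r T T' := ⟨1, T', h, rfl⟩

theorem reach_trans {r : BinTree → BinTree → Prop} {a b c : BinTree}
    (h1 : Reachable r a b) (h2 : Reachable r b c) : Reachable r a c := by
  obtain ⟨n1, h1⟩ := h1
  obtain ⟨n2, h2⟩ := h2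
  exact ⟨n1 + n2, chainLen_trans h1 h2⟩

theorem chainLen_symm {r : BinTree → BinTree → Prop}
    (hs : ∀ x y, r x y → r y x) :
    ∀ {n : ℕ} {a b : BinTree}, ChainLen r n a b → ChainLen r n b a := by
  intro n
  induction n with
  | zero => intro a b h; exact (show a = b from h).symm
  | succ n ih =>
      rintro a b ⟨U, hU, hrest⟩
      have h1 : ChainLen r n b U := ih hrest
      have h2 : ChainLen r 1 U a := ⟨a, hs _ _ hU, rfl⟩
      have := chainLen_trans h1 h2
      exact this

theorem RightArmStep.symm {S : Set ℕ} {T T' : BinTree} (h : RightArmStep S T T') :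
    RightArmStep S T' T := by
  obtain ⟨k, hk, h⟩ := h
  exact ⟨k, hk, h.symm⟩

theorem reach_symm {S : Set ℕ} {a b : BinTree}
    (h : Reachable (RightArmStep S) a b) : Reachable (RightArmStep S) b a := by
  obtain ⟨n, h⟩ := h
  exact ⟨n, chainLen_symm (fun x y hxy => hxy.symm) h⟩

/-- simulation: a split at any level `j ≥ mm` is realizable with levels `0` and `mm`. -/
theorem reach_split {S : Set ℕ} (h0 : (0:ℕ) ∈ S) {mm : ℕ} (hmm : mm ∈ S) (hmm1 : 1 ≤ mm) :
    ∀ (j : ℕ), mm ≤ j → ∀ (l1 l2 : List BinTree) (A B : BinTree), l1.length = j →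
      Reachable (RightArmStep S) (hang (l1 ++ node A B :: l2)) (hang (l1 ++ A :: B :: l2)) := by
  intro j
  induction j with
  | zero => intro h; omega
  | succ n ih =>
      intro hj l1 l2 A B hlen
      rcases Nat.eq_or_lt_of_le hj with heq | hlt
      · -- j = mm : direct step
        refine reach_single ⟨mm, hmm, Or.inl ?_⟩
        have := rotR_of_lists l1 l2 A B
        rw [hlen, ← heq] at this
        exact this
      · -- j > mm : merge the two front blocks, recurse, split back
        obtain ⟨x, y, l1', hl1⟩ : ∃ x y l1', l1 = x :: y :: l1' := by
          cases l1 with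
          | nil => simp at hlen
          | cons x l =>
              cases l with
              | nil => exfalso; simp at hlen; omega
              | cons y l1' => exact ⟨x, y, l1', rfl⟩
        subst hl1
        have hmerge : RotR 0 (hang ((node x y :: l1') ++ node A B :: l2))
            (hang ((x :: y :: l1') ++ node A B :: l2)) :=
          rotR_of_lists [] (l1' ++ node A B :: l2) x y
        have hmerge' : RotR 0 (hang ((node x y :: l1') ++ A :: B :: l2))
            (hang ((x :: y :: l1') ++ A :: B :: l2)) :=
          rotR_of_lists [] (l1' ++ A :: B :: l2) x y
        have hmid := ih (by omega) (node x y :: l1') l2 A B (by simp at hlen ⊢; omega)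
        refine reach_trans (reach_single ⟨0, h0, Or.inr hmerge⟩)
          (reach_trans hmid (reach_single ⟨0, h0, Or.inl hmerge'⟩))

end BinTree

namespace BinTree

theorem spine_determines {L L' : BinTree} (hd : spineDepth L = spineDepth L')
    (hc : spineC L = spineC L') : L = L' := by
  induction L generalizing L' with
  | leaf =>
      cases L' with
      | leaf => rfl
      | node A' B' => simp [spineDepth] at hd
  | node A B ihA ihB =>
      cases L' with
      | leaf => simp [spineDepth] at hd
      | node A' B' =>
          simp only [spineDepth] at hd
          simp only [spineC] at hc
          have hlen : (spineC A).length = (spineC A').length := by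
            rw [spineC_length, spineC_length]; omega
          obtain ⟨h1, h2⟩ := List.append_inj hc hlen
          have hB : B = B' := by simpa using h2
          rw [ihA (by omega) h1, hB]

theorem numNodes_spineC_mem {L : BinTree} {C : BinTree} (h : C ∈ spineC L) :
    numNodes C < numNodes L := by
  have h1 := numNodes_spine L
  have h2 : numNodes C ≤ ((spineC L).map numNodes).sum :=
    List.single_le_sum (by simp) _ (List.mem_map_of_mem h)
  have h3 : 0 < spineDepth L := by
    rw [← spineC_length]
    exact List.length_pos_iff.mpr (List.ne_nil_of_mem h)
  omega

theorem lexps_pf : ∀ (N : ℕ) (L L' : BinTree) (u u' : List ℕ), numNodes L ≤ N →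
    lexps L ++ u = lexps L' ++ u' → L = L' ∧ u = u' := by
  intro N
  induction N with
  | zero =>
      intro L L' u u' hN heq
      have hL : L = leaf := by
        cases L with
        | leaf => rfl
        | node A B => simp [numNodes] at hN
      subst hL
      rw [lexps_spine L', lexps] at heq
      simp at heq
      obtain ⟨h1, h2⟩ := heq
      have : L' = leaf := spineDepth_eq_zero h1.symm
      subst this
      simp [spineC, List.flatMap] at h2
      exact ⟨rfl, h2⟩
  | succ N ih =>
      intro L L' u u' hN heq
      rw [lexps_spine L, lexps_spine L'] at heq
      simp only [List.cons_append, List.cons.injEq] at heq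
      obtain ⟨hd, htail⟩ := heq
      have inner : ∀ (Cs Cs' : List BinTree) (v v' : List ℕ), Cs.length = Cs'.length →
          (∀ C ∈ Cs, numNodes C ≤ N) →
          Cs.flatMap lexps ++ v = Cs'.flatMap lexps ++ v' → Cs = Cs' ∧ v = v' := by
        intro Cs
        induction Cs with
        | nil =>
            intro Cs' v v' hlen hbound heq2
            cases Cs' with
            | nil => exact ⟨rfl, by simpa using heq2⟩
            | cons _ _ => simp at hlen
        | cons C Cs ihC =>
            intro Cs' v v' hlen hbound heq2
            cases Cs' with
            | nil => simp at hlen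
            | cons C' Cs'' =>
                simp only [List.flatMap_cons, List.append_assoc] at heq2
                obtain ⟨hC, hrest⟩ := ih C C' _ _ (hbound C (by simp)) heq2
                obtain ⟨hCs, hv⟩ := ihC Cs'' v v' (by simpa using hlen)
                  (fun D hD => hbound D (by simp [hD])) hrest
                exact ⟨by rw [hC, hCs], hv⟩
      have hbound : ∀ C ∈ spineC L, numNodes C ≤ N := by
        intro C hC
        have := numNodes_spineC_mem hC
        omega
      have hlen : (spineC L).length = (spineC L').length := by
        rw [spineC_length, spineC_length, hd]
      obtain ⟨hsc, hu⟩ := inner (spineC L) (spineC L') u u' hlen hbound htail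
      exact ⟨spine_determines hd hsc, hu⟩

theorem exps_inj : ∀ (T T' : BinTree), exps T = exps T' → T = T' := by
  intro T
  induction T with
  | leaf =>
      intro T' h
      cases T' with
      | leaf => rfl
      | node L' R' =>
          exfalso
          have h1 := congrArg List.length h
          rw [exps_length, exps_length] at h1
          simp [numNodes] at h1
  | node L R ihL ihR =>
      intro T' h
      cases T' with
      | leaf =>
          exfalso
          have h1 := congrArg List.length h
          rw [exps_length, exps_length] at h1
          simp [numNodes] at h1
      | node L' R' =>
          have h2 : lexps L ++ exps R = lexps L' ++ exps R' := h
          obtain ⟨hL, hR⟩ := lexps_pf (numNodes L) L L' _ _ le_rfl h2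
          rw [hL, ihR R' hR]

end BinTree

namespace BinTree

theorem getD_ext {l1 l2 : List ℕ} (hlen : l1.length = l2.length)
    (h : ∀ x, l1.getD x 0 = l2.getD x 0) : l1 = l2 := by
  apply List.ext_getElem hlen
  intro n h1 h2
  have := h n
  rwa [List.getD_eq_getElem _ _ h1, List.getD_eq_getElem _ _ h2] at this

theorem hang_rot_numNodes (l1 l2 : List BinTree) (A B : BinTree) :
    numNodes (hang (l1 ++ node A B :: l2)) = numNodes (hang (l1 ++ A :: B :: l2)) := by
  rw [numNodes_hang, numNodes_hang]
  simp [numNodes]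
  omega

theorem hang_rot_sum (l1 l2 : List BinTree) (A B : BinTree) :
    (exps (hang (l1 ++ A :: B :: l2))).sum + 1 = (exps (hang (l1 ++ node A B :: l2))).sum := by
  obtain ⟨Y, v, h1, h2⟩ := rot_exps l1 l2 A B
  rw [h1, h2]
  simp
  omega

theorem flat_replicate_leaf (c : ℕ) :
    (List.replicate c leaf).flatMap lexps = List.replicate c 0 := by
  induction c with
  | zero => rfl
  | succ n ih => simp [List.replicate_succ, ih, lexps]

theorem zeros_then_pos : ∀ (l : List BinTree) (c : ℕ),
    (∀ r, r < c → (l.flatMap lexps).getD r 0 = 0) →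
    0 < (l.flatMap lexps).getD c 0 →
    ∃ A B l2, l = List.replicate c leaf ++ node A B :: l2 := by
  intro l
  induction l with
  | nil =>
      intro c _ hpos
      simp [List.getD] at hpos
  | cons B0 l' ih =>
      intro c hz hpos
      have hB0 : lexps B0 = spineDepth B0 :: (spineC B0).flatMap lexps := lexps_spine B0
      have hflat : (B0 :: l').flatMap lexps
          = spineDepth B0 :: ((spineC B0).flatMap lexps ++ l'.flatMap lexps) := by
        simp [hB0]
      cases c with
      | zero =>
          rw [hflat] at hpos
          have hd : 0 < spineDepth B0 := by simpa using hpos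
          cases B0 with
          | leaf => simp [spineDepth] at hd
          | node A B => exact ⟨A, B, l', by simp⟩
      | succ c' =>
          have h0 : spineDepth B0 = 0 := by
            have := hz 0 (by omega)
            rw [hflat] at this
            simpa using this
          have hB0leaf : B0 = leaf := spineDepth_eq_zero h0
          subst hB0leaf
          have hflat' : (leaf :: l').flatMap lexps = 0 :: l'.flatMap lexps := by
            simp [lexps]
          obtain ⟨A, B, l2, hl⟩ := ih c'
            (fun r hr => by
              have := hz (r+1) (by omega)
              rw [hflat'] at this
              simpa using this)
            (by
              rw [hflat'] at hpos
              simpa using hpos)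
          exact ⟨A, B, l2, by rw [List.replicate_succ, hl]; simp⟩

/-- Either make one allowed splitting move on `T` decreasing the caret count and
preserving masks, or `T` is canonical: zero at the root and beyond its window. -/
theorem constr_progress {S : Set ℕ} (h0 : (0:ℕ) ∈ S) {m : ℕ} (hmS : m ∈ S) (hm1 : 1 ≤ m)
    (T : BinTree) :
    (∃ T', Reachable (RightArmStep S) T T' ∧ numNodes T' = numNodes T ∧
       (exps T').sum + 1 = (exps T).sum ∧
       ∀ g, (MaskEq m g (expsF T) ↔ MaskEq m g (expsF T'))) ∨
    (expsF T 0 = 0 ∧ ∀ q, Steps (expsF T) 1 (m-1) q → ∀ x, q ≤ x → expsF T x = 0) := by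
  cases T with
  | leaf =>
      right
      constructor
      · rfl
      · intro q hq x hx
        have h1 := hq.le
        rw [expsF, exps]
        refine List.getD_eq_default _ _ ?_
        simp
        omega
  | node L R =>
      rcases Nat.eq_zero_or_pos (spineDepth L) with hd | hd
      · -- root block is a leaf
        have hL : L = leaf := spineDepth_eq_zero hd
        subst hL
        set rest := armBlocks R with hrest
        have hT : node leaf R = hang (leaf :: rest) := by
          rw [hrest]
          simp [hang, hang_armBlocks]
        have hdata : ∀ x, expsF (node leaf R) x = (0 :: rest.flatMap lexps).getD x 0 := by
          intro x
          rw [hT]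
          have := expsF_hang_data leaf rest x
          simpa [spineC, spineDepth] using this
        by_cases hex : ∃ r, 0 < ((rest.drop (m-1)).flatMap lexps).getD r 0
        · -- there is a caret beyond the window : split it
          left
          classical
          have hdropne : rest.drop (m-1) ≠ [] := by
            intro hcon
            obtain ⟨r, hr⟩ := hex
            rw [hcon] at hr
            simp [List.getD] at hr
          have hmrest : m - 1 < rest.length := by
            by_contra hcon
            push_neg at hcon
            exact hdropne (List.drop_eq_nil_of_le hcon)
          set c := Nat.find hex with hc
          have hcpos := Nat.find_spec hex
          have hcmin : ∀ r, r < c → ((rest.drop (m-1)).flatMap lexps).getD r 0 = 0 := by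
            intro r hr
            have := Nat.find_min hex hr
            omega
          obtain ⟨A, B, l2, hdrop⟩ := zeros_then_pos _ c hcmin hcpos
          set l1 : List BinTree := leaf :: (rest.take (m-1) ++ List.replicate c leaf) with hl1
          have hrest2 : rest = rest.take (m-1) ++ (List.replicate c leaf ++ node A B :: l2) := by
            conv_lhs => rw [← List.take_append_drop (m-1) rest]
            rw [hdrop]
          have hTl : node leaf R = hang (l1 ++ node A B :: l2) := by
            rw [hT, hl1]
            congr 1
            conv_lhs => rw [hrest2]
            simp
          have hlen1 : l1.length = 1 + (m-1) + c := by
            rw [hl1]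
            simp
            omega
          have hlenm : m ≤ l1.length := by omega
          refine ⟨hang (l1 ++ A :: B :: l2), ?_, ?_, ?_, ?_⟩
          · rw [hTl]
            exact reach_split h0 hmS hm1 l1.length hlenm l1 l2 A B rfl
          · rw [hTl]
            exact (hang_rot_numNodes l1 l2 A B).symm
          · rw [hTl]
            exact hang_rot_sum l1 l2 A B
          · intro g
            have hrot : RotR l1.length (hang (l1 ++ node A B :: l2)) (hang (l1 ++ A :: B :: l2)) :=
              rotR_of_lists l1 l2 A B
            rw [hTl]
            exact rot_maskeq hm1 (Or.inr hlenm) hrot g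
        · -- no caret beyond the window : canonical
          right
          push_neg at hex
          refine ⟨by rw [hdata 0]; rfl, ?_⟩
          intro q hq x hx
          have hq2 : q = qval rest (m-1) := by
            refine hq.det (valid_steps (s := 0) (Bs := rest) hdata (m-1))
          have hx1 : 1 ≤ x := by
            have := hq.le
            omega
          rw [hdata x]
          have hxd : (0 :: rest.flatMap lexps).getD x 0 = (rest.flatMap lexps).getD (x-1) 0 := by
            rw [show x = (x-1)+1 by omega]
            exact List.getD_cons_succ ..
          rw [hxd]
          have hsplit : rest.flatMap lexps
              = (rest.take (m-1)).flatMap lexps ++ (rest.drop (m-1)).flatMap lexps := by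
            conv_lhs => rw [← List.take_append_drop (m-1) rest]
            rw [List.flatMap_append]
          have hcum : ((rest.take (m-1)).flatMap lexps).length ≤ x - 1 := by
            rw [hq2] at hx
            unfold qval at hx
            omega
          rw [hsplit, List.getD_append_right _ _ _ _ hcum]
          have := hex (x - 1 - ((rest.take (m-1)).flatMap lexps).length)
          omega
      · -- the root block is interior : split at the root
        left
        obtain ⟨A, B, hL⟩ : ∃ A B, L = node A B := by
          cases L with
          | leaf => simp [spineDepth] at hd
          | node A B => exact ⟨A, B, rfl⟩
        subst hL
        have hTl : node (node A B) R = hang ([] ++ node A B :: armBlocks R) := by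
          simp [hang, hang_armBlocks]
        refine ⟨hang ([] ++ A :: B :: armBlocks R), ?_, ?_, ?_, ?_⟩
        · rw [hTl]
          refine reach_single ⟨0, h0, Or.inl ?_⟩
          exact rotR_of_lists [] (armBlocks R) A B
        · rw [hTl]
          exact (hang_rot_numNodes _ _ A B).symm
        · rw [hTl]
          exact hang_rot_sum _ _ A B
        · intro g
          have hrot : RotR 0 (hang ([] ++ node A B :: armBlocks R))
              (hang ([] ++ A :: B :: armBlocks R)) := rotR_of_lists [] (armBlocks R) A B
          rw [hTl]
          exact rot_maskeq hm1 (Or.inl rfl) hrot g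

/-- Main construction: equal masks imply reachability. -/
theorem constr {S : Set ℕ} (h0 : (0:ℕ) ∈ S) {m : ℕ} (hmS : m ∈ S) (hm1 : 1 ≤ m) :
    ∀ (N : ℕ) (T1 T2 : BinTree), (exps T1).sum + (exps T2).sum ≤ N →
    numNodes T1 = numNodes T2 → MaskEq m (expsF T2) (expsF T1) →
    Reachable (RightArmStep S) T1 T2 := by
  intro N
  induction N with
  | zero =>
      intro T1 T2 hN hn hmq
      -- no moves possible case is handled uniformly below; here sums are zero
      rcases constr_progress h0 hmS hm1 T1 with ⟨T', _, _, hsum, _⟩ | hcan1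
      · omega
      rcases constr_progress h0 hmS hm1 T2 with ⟨T', _, _, hsum, _⟩ | hcan2
      · omega
      -- both canonical : they are equal
      obtain ⟨q, s1, s2, hag⟩ := hmq
      have hlen : (exps T1).length = (exps T2).length := by
        rw [exps_length, exps_length, hn]
      have : exps T1 = exps T2 := by
        refine getD_ext hlen ?_
        intro x
        rcases Nat.eq_zero_or_pos x with hx | hx
        · subst hx; rw [show ((exps T1).getD 0 0 : ℕ) = expsF T1 0 from rfl,
            show ((exps T2).getD 0 0 : ℕ) = expsF T2 0 from rfl, hcan1.1, hcan2.1]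
        · rcases Nat.lt_or_ge x q with hxq | hxq
          · exact (hag x hx hxq).symm
          · rw [show ((exps T1).getD x 0 : ℕ) = expsF T1 x from rfl,
              show ((exps T2).getD x 0 : ℕ) = expsF T2 x from rfl,
              hcan1.2 q s2 x hxq, hcan2.2 q s1 x hxq]
      rw [exps_inj T1 T2 this]
      exact reach_refl T2
  | succ N ih =>
      intro T1 T2 hN hn hmq
      rcases constr_progress h0 hmS hm1 T1 with ⟨T1', hr1, hn1, hsum1, hmq1⟩ | hcan1
      · refine reach_trans hr1 (ih T1' T2 (by omega) (by omega) ?_)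
        exact (hmq1 (expsF T2)).mp hmq
      rcases constr_progress h0 hmS hm1 T2 with ⟨T2', hr2, hn2, hsum2, hmq2⟩ | hcan2
      · have hmq' : MaskEq m (expsF T2') (expsF T1) := by
          have := (hmq2 (expsF T1)).mp hmq.symm
          exact this.symm
        refine reach_trans (ih T1 T2' (by omega) (by omega) hmq') (reach_symm hr2)
      -- both canonical : equal
      obtain ⟨q, s1, s2, hag⟩ := hmq
      have hlen : (exps T1).length = (exps T2).length := by
        rw [exps_length, exps_length, hn]
      have : exps T1 = exps T2 := by
        refine getD_ext hlen ?_
        intro x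
        rcases Nat.eq_zero_or_pos x with hx | hx
        · subst hx; rw [show ((exps T1).getD 0 0 : ℕ) = expsF T1 0 from rfl,
            show ((exps T2).getD 0 0 : ℕ) = expsF T2 0 from rfl, hcan1.1, hcan2.1]
        · rcases Nat.lt_or_ge x q with hxq | hxq
          · exact (hag x hx hxq).symm
          · rw [show ((exps T1).getD x 0 : ℕ) = expsF T1 x from rfl,
              show ((exps T2).getD x 0 : ℕ) = expsF T2 x from rfl,
              hcan1.2 q s2 x hxq, hcan2.2 q s1 x hxq]
      rw [exps_inj T1 T2 this]
      exact reach_refl T2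

end BinTree

namespace BinTree

theorem valid_expsF' (T : BinTree) : Valid (expsF T) := valid_expsF T

theorem reach_maskeq {S : Set ℕ} {m : ℕ} (hm1 : 1 ≤ m)
    (hS : ∀ k ∈ S, k = 0 ∨ m ≤ k) :
    ∀ {n : ℕ} {T T2 : BinTree}, ChainLen (RightArmStep S) n T T2 →
      MaskEq m (expsF T2) (expsF T) := by
  intro n
  induction n with
  | zero =>
      intro T T2 h
      rw [show T = T2 from h]
      exact maskEq_refl (valid_expsF' T2)
  | succ n ih =>
      rintro T T2 ⟨U, ⟨k, hk, hstep⟩, hrest⟩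
      have hU := ih hrest
      rcases hstep with h | h
      · exact (rot_maskeq hm1 (hS k hk) h (expsF T2)).mpr hU
      · exact (rot_maskeq hm1 (hS k hk) h (expsF T2)).mp hU

end BinTree

open BinTree in
theorem rra_defined_iff_unreduced' (I : Finset ℕ) (hpos : ∀ k ∈ I, 0 < k) (hne : I.Nonempty)
    (T1 T2 : BinTree) (hn : T1.numNodes = T2.numNodes) (p q : ℕ → ℕ)
    (hpr : Relation.ReflTransGen PRedStep
      (fun k => (exps T2).getD k 0, fun k => (exps T1).getD k 0) (p, q))
    (hmax : ∀ a, ¬PRedStep (p, q) a) :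
    Reachable (RightArmStep (insert 0 (I : Set ℕ))) T1 T2 ↔
      ∀ t, 1 ≤ t → t ≤ I.min' hne - 1 → p t = 0 ∧ q t = 0 := by
  set m := I.min' hne with hm
  have hm1 : 1 ≤ m := hpos _ (I.min'_mem hne)
  have h0S : (0:ℕ) ∈ insert 0 (I : Set ℕ) := Set.mem_insert 0 _
  have hmS : (m:ℕ) ∈ insert 0 (I : Set ℕ) :=
    Set.mem_insert_of_mem _ (by exact_mod_cast I.min'_mem hne)
  have hS : ∀ k ∈ insert 0 (I : Set ℕ), k = 0 ∨ m ≤ k := by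
    rintro k hk
    rcases Set.mem_insert_iff.mp hk with h | h
    · left; exact h
    · right; exact I.min'_le k (by exact_mod_cast h)
  have hvf0 : Valid (fun k => (exps T2).getD k 0) := valid_expsF T2
  have hve0 : Valid (fun k => (exps T1).getD k 0) := valid_expsF T1
  obtain ⟨⟨hvp, hvq⟩, hiff⟩ := pred_chain (m := m) hpr hvf0 hve0
  constructor
  · rintro ⟨n, hchain⟩
    have hm0 : MaskEq m (expsF T2) (expsF T1) := reach_maskeq hm1 hS hchain
    have hmpq : MaskEq m p q := hiff.mpr hm0
    have hz := zeros_of_maskeq_irred hvp hvq hmax hmpq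
    intro t ht1 ht2
    exact hz t (by omega) (by omega)
  · intro hz
    have hmpq : MaskEq m p q := maskeq_of_zeros (fun t h1 h2 => hz t h1 (by omega))
    have hm0 : MaskEq m (expsF T2) (expsF T1) := hiff.mp hmpq
    exact constr h0S hmS hm1 _ T1 T2 le_rfl hn hm0

theorem rra_defined_iff_unreduced (I : Finset ℕ) (hpos : ∀ k ∈ I, 0 < k) (hne : I.Nonempty)
    (T1 T2 : BinTree) (hn : T1.numNodes = T2.numNodes) (p q : ℕ → ℕ)
    (hpr : Relation.ReflTransGen PRedStep
      (fun k => (exps T2).getD k 0, fun k => (exps T1).getD k 0) (p, q))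
    (hmax : ∀ a, ¬PRedStep (p, q) a) :
    Reachable (RightArmStep (insert 0 (I : Set ℕ))) T1 T2 ↔
      ∀ t, 1 ≤ t → t ≤ I.min' hne - 1 → p t = 0 ∧ q t = 0 := by
  exact rra_defined_iff_unreduced' I hpos hne T1 T2 hn p q hpr hmax
end

section
/- Let T1 and T2 be trees with the same number of interior nodes, let S = {x_0, x_{i_1}, …, x_{i_L}} with 0 < i_1 < ⋯ < i_L, and suppose the restricted right-arm rotation distance d_RRA^S(T1,T2) is defined. Then |w|_S ≤ d_RRA^S(T1,T2), where w is the element of Thompson's group F represented by the pair (T1,T2) and |w|_S is its word length with respect to the generating set S. -/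
open BinTree


namespace RRAAux

lemma thompson_rel {i n : ℕ} (h : i < n) : xg i * xg (n + 1) = xg n * xg i := by
  have hr : ((FreeGroup.of i)⁻¹ * FreeGroup.of n * FreeGroup.of i * (FreeGroup.of (n + 1))⁻¹)
      ∈ Subgroup.normalClosure thompsonRels :=
    Subgroup.subset_normalClosure ⟨i, n, h, rfl⟩
  have h1 : ((QuotientGroup.mk ((FreeGroup.of i)⁻¹ * FreeGroup.of n * FreeGroup.of i *
      (FreeGroup.of (n + 1))⁻¹)) : ThompsonF) = 1 := (QuotientGroup.eq_one_iff _).mpr hr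
  have h2 : (xg i)⁻¹ * xg n * xg i * (xg (n + 1))⁻¹ = 1 := by
    have h1' : PresentedGroup.mk thompsonRels ((FreeGroup.of i)⁻¹ * FreeGroup.of n * FreeGroup.of i *
        (FreeGroup.of (n + 1))⁻¹) = 1 := h1
    simpa [xg, PresentedGroup.of, map_mul, map_inv] using h1'
  have h3 : (xg i)⁻¹ * xg n * xg i = xg (n + 1) := mul_inv_eq_one.mp h2
  calc xg i * xg (n + 1) = xg i * ((xg i)⁻¹ * xg n * xg i) := by rw [h3]
    _ = xg n * xg i := by group

noncomputable def prodExps : List ℕ → ℕ → ThompsonF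
  | [], _ => 1
  | a :: l, s => xg s ^ a * prodExps l (s + 1)

lemma prodExps_append (u v : List ℕ) :
    ∀ s, prodExps (u ++ v) s = prodExps u s * prodExps v (s + u.length) := by
  induction u with
  | nil => intro s; simp [prodExps]
  | cons a t ih =>
    intro s
    have e : s + 1 + t.length = s + (t.length + 1) := by omega
    simp only [List.cons_append, prodExps, List.length_cons, List.append_eq]
    rw [ih (s + 1), e, mul_assoc]

lemma incFirst_length : ∀ l : List ℕ, (incFirst l).length = l.length
  | [] => rfl
  | _ :: _ => rfl

lemma numLeaves_eq_numNodes (T : BinTree) : numLeaves T = numNodes T + 1 := by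
  induction T with
  | leaf => rfl
  | node A B ihA ihB => simp only [numLeaves, numNodes, ihA, ihB]; omega

lemma lexps_length (T : BinTree) : (lexps T).length = numLeaves T := by
  induction T with
  | leaf => rfl
  | node A B ihA ihB => simp [lexps, numLeaves, incFirst_length, ihA, ihB]

lemma exps_length (T : BinTree) : (exps T).length = numLeaves T := by
  induction T with
  | leaf => rfl
  | node A B _ ihB => simp [exps, numLeaves, lexps_length, ihB]

lemma prodExps_incFirst (L : BinTree) (s : ℕ) :
    prodExps (incFirst (lexps L)) s = xg s * prodExps (lexps L) s := by
  obtain ⟨a, t, hat⟩ : ∃ a t, lexps L = a :: t := by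
    cases hl : lexps L with
    | nil =>
      have := lexps_length L
      rw [hl] at this
      simp [numLeaves_eq_numNodes] at this
    | cons a t => exact ⟨a, t, rfl⟩
  rw [hat]
  simp [incFirst, prodExps, pow_succ', mul_assoc]

lemma prodExps_lexps_swap (L : BinTree) : ∀ s c, s < c →
    prodExps (lexps L) s * xg (c + numNodes L) = xg c * prodExps (lexps L) s := by
  induction L with
  | leaf => intro s c _; simp [lexps, prodExps, numNodes]
  | node A B ihA ihB =>
    intro s c hsc
    have hlen : (incFirst (lexps A)).length = numNodes A + 1 := by
      rw [incFirst_length, lexps_length, numLeaves_eq_numNodes]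
    rw [show lexps (BinTree.node A B) = incFirst (lexps A) ++ lexps B from rfl,
      prodExps_append, hlen, prodExps_incFirst]
    set pA := prodExps (lexps A) s with hpA
    set pB := prodExps (lexps B) (s + (numNodes A + 1)) with hpB
    have e1 : c + numNodes (BinTree.node A B) = (c + numNodes A + 1) + numNodes B := by
      simp only [numNodes]; omega
    have h1 := ihB (s + (numNodes A + 1)) (c + numNodes A + 1) (by omega)
    have h2 := ihA s (c + 1) (by omega)
    have h3 := thompson_rel hsc
    calc xg s * pA * pB * xg (c + numNodes (BinTree.node A B))
        = xg s * pA * (pB * xg ((c + numNodes A + 1) + numNodes B)) := by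
          rw [e1, mul_assoc]
      _ = xg s * pA * (xg (c + numNodes A + 1) * pB) := by rw [h1]
      _ = xg s * (pA * xg ((c + 1) + numNodes A)) * pB := by
          rw [show c + numNodes A + 1 = (c + 1) + numNodes A from by omega]
          group
      _ = xg s * (xg (c + 1) * pA) * pB := by rw [h2]
      _ = (xg s * xg (c + 1)) * pA * pB := by group
      _ = (xg c * xg s) * pA * pB := by rw [h3]
      _ = xg c * (xg s * pA * pB) := by group

lemma rotR_prodExps : ∀ {k : ℕ} {T T' : BinTree}, RotR k T T' →
    ∀ s, prodExps (exps T) s = xg (s + k) * prodExps (exps T') s := by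
  intro k T T' h
  induction h with
  | root A B C =>
    intro s
    simp only [exps, lexps, List.append_assoc, prodExps_append, prodExps_incFirst,
      incFirst_length, Nat.add_zero, mul_assoc]
  | @step k R R' L hR ih =>
    intro s
    simp only [exps, prodExps_append, lexps_length]
    rw [ih (s + numLeaves L)]
    have e : s + numLeaves L + k = (s + 1 + k) + numNodes L := by
      rw [numLeaves_eq_numNodes]; omega
    have h2 := prodExps_lexps_swap L s (s + 1 + k) (by omega)
    rw [e, ← mul_assoc, h2, show s + 1 + k = s + (k + 1) from by omega, mul_assoc]

lemma chain_list {S : Set ℕ} : ∀ (n : ℕ) (T T' : BinTree),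
    ChainLen (RightArmStep S) n T T' →
    ∃ l : List ThompsonF, l.length = n ∧
      (∀ g ∈ l, g ∈ (xg '' S) ∪ (xg '' S)⁻¹) ∧
      prodExps (exps T) 0 = l.prod * prodExps (exps T') 0 := by
  intro n
  induction n with
  | zero =>
    intro T T' h
    have h' : T = T' := h
    exact ⟨[], rfl, by simp, by rw [h']; simp⟩
  | succ m ih =>
    intro T T' h
    obtain ⟨U, hstep, hchain⟩ := h
    obtain ⟨k, hk, hrot⟩ := hstep
    obtain ⟨l, hlen, hmem, hprod⟩ := ih U T' hchain
    rcases hrot with h1 | h1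
    · refine ⟨xg k :: l, by simp [hlen], ?_, ?_⟩
      · intro g hg
        rcases List.mem_cons.mp hg with rfl | hg
        · exact Or.inl ⟨k, hk, rfl⟩
        · exact hmem g hg
      · have hh := rotR_prodExps h1 0
        simp only [Nat.zero_add] at hh
        rw [hh, hprod, List.prod_cons, mul_assoc]
    · refine ⟨(xg k)⁻¹ :: l, by simp [hlen], ?_, ?_⟩
      · intro g hg
        rcases List.mem_cons.mp hg with rfl | hg
        · exact Or.inr (Set.mem_inv.mpr (by simpa using ⟨k, hk, rfl⟩))
        · exact hmem g hg
      · have hh := rotR_prodExps h1 0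
        simp only [Nat.zero_add] at hh
        have hT : prodExps (exps T) 0 = (xg k)⁻¹ * prodExps (exps U) 0 := by
          rw [hh]; group
        rw [hT, hprod, List.prod_cons, mul_assoc]

lemma prodExps_eq_range : ∀ (l : List ℕ) (s : ℕ),
    prodExps l s = ((List.range l.length).map fun i => xg (s + i) ^ l.getD i 0).prod := by
  intro l
  induction l with
  | nil => intro s; simp [prodExps]
  | cons a t ih =>
    intro s
    rw [List.length_cons, List.range_succ_eq_map]
    simp only [List.map_cons, List.map_map, List.prod_cons]
    rw [show prodExps (a :: t) s = xg s ^ a * prodExps t (s + 1) from rfl, ih (s + 1)]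
    have htail : (List.map ((fun i => xg (s + i) ^ (a :: t).getD i 0) ∘ Nat.succ)
        (List.range t.length)).prod
        = (List.map (fun i => xg (s + 1 + i) ^ t.getD i 0) (List.range t.length)).prod := by
      apply congrArg List.prod
      apply List.map_congr_left
      intro i _
      have e : s + (i + 1) = s + 1 + i := by omega
      simp only [Function.comp_apply, Nat.succ_eq_add_one, List.getD_cons_succ, e]
    rw [htail]
    have hhead : xg (s + 0) ^ ((a :: t).getD 0 0) = xg s ^ a := by simp
    rw [hhead]

lemma range_prod_pad (p : ℕ → ℕ) {m N : ℕ} (h : m ≤ N) (hp : ∀ i, m ≤ i → p i = 0) :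
    ((List.range N).map fun i => xg i ^ p i).prod
      = ((List.range m).map fun i => xg i ^ p i).prod := by
  induction N, h using Nat.le_induction with
  | base => rfl
  | succ N hN ih => rw [List.range_succ]; simp [List.prod_append, hp N hN, ih]

lemma range_prod_eq (l : List ℕ) {N : ℕ} (h : l.length ≤ N) :
    ((List.range N).map fun i => xg i ^ l.getD i 0).prod = prodExps l 0 := by
  rw [range_prod_pad _ h (fun i hi => List.getD_eq_default _ _ hi), prodExps_eq_range]
  simp

lemma rev_inv_prod (g : ℕ → ThompsonF) (L : List ℕ) :
    (L.reverse.map fun j => (g j)⁻¹).prod = ((L.map g).prod)⁻¹ := by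
  rw [List.prod_inv_reverse, List.map_map, List.map_reverse]
  rfl

lemma treePairElem_eq (T1 T2 : BinTree) :
    treePairElem T1 T2 = prodExps (exps T2) 0 * (prodExps (exps T1) 0)⁻¹ := by
  unfold treePairElem nfWord
  rw [rev_inv_prod]
  rw [range_prod_eq (exps T2) (le_max_right _ _), range_prod_eq (exps T1) (le_max_left _ _)]

lemma wordLen_le_length (S : Set ThompsonF) (l : List ThompsonF)
    (h : ∀ g ∈ l, g ∈ S ∪ S⁻¹) : wordLen S l.prod ≤ l.length := by
  apply Nat.sInf_le
  refine ⟨fun i => l.get i, fun i => h _ (List.get_mem l i), by simp [List.ofFn_get]⟩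

end RRAAux

open RRAAux in
theorem wordLen_le_rra_distance (I : Finset ℕ) (hpos : ∀ k ∈ I, 0 < k) (hne : I.Nonempty)
    (T1 T2 : BinTree) (hn : T1.numNodes = T2.numNodes)
    (hdef : Reachable (RightArmStep (insert 0 (I : Set ℕ))) T1 T2) :
    wordLen (xg '' insert 0 (I : Set ℕ)) (treePairElem T1 T2) ≤
      stepDist (RightArmStep (insert 0 (I : Set ℕ))) T1 T2 := by
  have hmem : ChainLen (RightArmStep (insert 0 (I : Set ℕ)))
      (stepDist (RightArmStep (insert 0 (I : Set ℕ))) T1 T2) T1 T2 :=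
    Nat.sInf_mem hdef
  obtain ⟨l, hlen, hmeml, hprod⟩ := chain_list _ T1 T2 hmem
  have key : treePairElem T1 T2 = ((l.reverse.map fun x => x⁻¹)).prod := by
    rw [treePairElem_eq, hprod, List.map_reverse, ← List.prod_inv_reverse]
    group
  rw [key]
  have hlen2 : (l.reverse.map fun x => x⁻¹).length = l.length := by simp
  calc wordLen (xg '' insert 0 (I : Set ℕ)) ((l.reverse.map fun x => x⁻¹)).prod
      ≤ (l.reverse.map fun x => x⁻¹).length := by
        apply wordLen_le_length
        intro g hg
        obtain ⟨x, hx, rfl⟩ := List.mem_map.mp hg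
        have hx' := hmeml x (List.mem_reverse.mp hx)
        rcases hx' with hx' | hx'
        · exact Or.inr (Set.mem_inv.mpr (by simpa using hx'))
        · exact Or.inl (by simpa using Set.mem_inv.mp hx')
    _ = stepDist (RightArmStep (insert 0 (I : Set ℕ))) T1 T2 := by rw [hlen2, hlen]
end

section
/- Let S = {x_0, x_{i_1}, …, x_{i_L}} with 0 < i_1 < i_2 < ⋯ < i_L, and let T1 and T2 be trees, each with n interior nodes where n ≥ 3, for which the restricted right-arm rotation distance d_RRA^S(T1,T2) is defined. Then d_RRA^S(T1,T2) ≤ 4n − 8. -/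
open BinTree

namespace RRAProof

open BinTree

/-! ### Lists of trees: the right-arm forest model -/

/-- Reassemble a tree from the list of left subtrees along its right arm. -/
def unarm (l : List BinTree) : BinTree := l.foldr node leaf

/-- The list of left subtrees along the right arm. -/
def armL : BinTree → List BinTree
  | leaf => []
  | node A R => A :: armL R

/-- The subtrees hanging off the left spine (top to bottom, excluding leftmost leaf). -/
def spineT : BinTree → List BinTree
  | leaf => []
  | node B C => spineT B ++ [C]

/-- Total number of interior nodes of entries. -/
def KL : List BinTree → ℕ
  | [] => 0
  | A :: l => A.numNodes + KL l

/-- Total number of leaves of entries. -/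
def LL : List BinTree → ℕ
  | [] => 0
  | A :: l => A.numLeaves + LL l

/-- Replace each entry by its leaves. -/
def flatAll : List BinTree → List BinTree
  | [] => []
  | A :: l => List.replicate A.numLeaves leaf ++ flatAll l

/-- Merge the first two entries. -/
def fold1 : List BinTree → List BinTree
  | A :: B :: l => node A B :: l
  | l => l

/-- Iterate merging of the first two entries. -/
def foldN (k : ℕ) (l : List BinTree) : List BinTree := fold1^[k] l

/-- The fully 0-split form of a tree. -/
def repL : BinTree → List BinTree
  | leaf => []
  | node A R => leaf :: (spineT A ++ armL R)

/-- The component invariant: the fully split form with positions `≥ i` flattened. -/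
def canonL (i : ℕ) (T : BinTree) : List BinTree :=
  (repL T).take i ++ flatAll ((repL T).drop i)

/-- The canonical tree of the component of `T`. -/
def Zc (i : ℕ) (T : BinTree) : BinTree :=
  unarm (foldN ((canonL i T).length - 3) (canonL i T))

/-! ### Elementary lemmas -/

lemma numLeaves_eq (A : BinTree) : A.numLeaves = A.numNodes + 1 := by
  induction A with
  | leaf => rfl
  | node B C ihB ihC => simp [BinTree.numLeaves, BinTree.numNodes, ihB, ihC]; omega

lemma unarm_armL (T : BinTree) : unarm (armL T) = T := by
  induction T with
  | leaf => rfl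
  | node A R ihA ihR => simp [armL, unarm] at ihR ⊢; exact ihR

lemma KL_append (x y : List BinTree) : KL (x ++ y) = KL x + KL y := by
  induction x with
  | nil => simp [KL]
  | cons A x ih => simp [KL, ih]; omega

lemma LL_append (x y : List BinTree) : LL (x ++ y) = LL x + LL y := by
  induction x with
  | nil => simp [LL]
  | cons A x ih => simp [LL, ih]; omega

lemma flatAll_append (x y : List BinTree) : flatAll (x ++ y) = flatAll x ++ flatAll y := by
  induction x with
  | nil => simp [flatAll]
  | cons A x ih => simp [flatAll, ih]

lemma length_flatAll (l : List BinTree) : (flatAll l).length = LL l := by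
  induction l with
  | nil => rfl
  | cons A l ih => simp [flatAll, LL, ih]

lemma LL_eq_KL (l : List BinTree) : LL l = KL l + l.length := by
  induction l with
  | nil => rfl
  | cons A l ih => simp [LL, KL, ih, numLeaves_eq]; omega

lemma KL_spineT (A : BinTree) : KL (spineT A) + (spineT A).length = A.numNodes := by
  induction A with
  | leaf => rfl
  | node B C ihB ihC =>
    simp [spineT, KL_append, BinTree.numNodes, KL]
    omega

lemma numNodes_armL (T : BinTree) : T.numNodes = KL (armL T) + (armL T).length := by
  induction T with
  | leaf => rfl
  | node A R ihA ihR => simp [armL, KL, BinTree.numNodes, ihR]; omega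

lemma flatAll_of_KL_zero : ∀ (l : List BinTree), KL l = 0 → flatAll l = l := by
  intro l
  induction l with
  | nil => intro _; rfl
  | cons A l ih =>
    intro h
    simp [KL] at h
    cases A with
    | leaf => simp [flatAll, BinTree.numLeaves, ih h.2]
    | node B C => simp [BinTree.numNodes] at h

lemma take_append_le {α : Type*} : ∀ (n : ℕ) (x y : List α), n ≤ x.length →
    (x ++ y).take n = x.take n := by
  intro n
  induction n with
  | zero => simp
  | succ n ih =>
    intro x y h
    cases x with
    | nil => simp at h
    | cons a x =>
      simp only [List.length_cons, Nat.add_le_add_iff_right] at h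
      simp only [List.cons_append, List.take_succ_cons]
      rw [ih x y h]

lemma drop_append_le {α : Type*} : ∀ (n : ℕ) (x y : List α), n ≤ x.length →
    (x ++ y).drop n = x.drop n ++ y := by
  intro n
  induction n with
  | zero => simp
  | succ n ih =>
    intro x y h
    cases x with
    | nil => simp at h
    | cons a x =>
      simp only [List.length_cons, Nat.add_le_add_iff_right] at h
      simp only [List.cons_append, List.drop_succ_cons]
      exact ih x y h

end RRAProof
namespace RRAProof
open BinTree

/-! ### Chain lemmas -/

variable {r : BinTree → BinTree → Prop}

lemma chain_zero {T : BinTree} : ChainLen r 0 T T := rfl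

lemma chain_succ {T U V : BinTree} {n : ℕ} (h : r T U) (h2 : ChainLen r n U V) :
    ChainLen r (n + 1) T V := ⟨U, h, h2⟩

lemma chain_trans : ∀ {a : ℕ} {b : ℕ} {T U V : BinTree},
    ChainLen r a T U → ChainLen r b U V → ChainLen r (a + b) T V := by
  intro a
  induction a with
  | zero =>
    intro b T U V h h2
    have : T = U := h
    subst this
    simpa using h2
  | succ a ih =>
    intro b T U V h h2
    obtain ⟨W, hW, hrest⟩ := h
    have : a + 1 + b = (a + b) + 1 := by omega
    rw [this]
    exact ⟨W, hW, ih hrest h2⟩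

lemma chain_symm (hsym : ∀ x y, r x y → r y x) : ∀ {a : ℕ} {T U : BinTree},
    ChainLen r a T U → ChainLen r a U T := by
  intro a
  induction a with
  | zero => intro T U h; exact (h : T = U).symm
  | succ a ih =>
    intro T U h
    obtain ⟨W, hW, hrest⟩ := h
    have h1 : ChainLen r 1 W T := ⟨T, hsym _ _ hW, rfl⟩
    have := chain_trans (ih hrest) h1
    simpa using this

lemma rightArmStep_symm (S : Set ℕ) : ∀ x y, RightArmStep S x y → RightArmStep S y x := by
  rintro x y ⟨k, hk, h | h⟩
  · exact ⟨k, hk, Or.inr h⟩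
  · exact ⟨k, hk, Or.inl h⟩

/-! ### Elementary steps -/

lemma rotR_unarm : ∀ (l1 : List BinTree) (B C : BinTree) (l2 : List BinTree),
    RotR l1.length (unarm (l1 ++ node B C :: l2)) (unarm (l1 ++ B :: C :: l2)) := by
  intro l1
  induction l1 with
  | nil => intro B C l2; exact RotR.root B C (unarm l2)
  | cons A l1 ih => intro B C l2; exact RotR.step A (ih B C l2)

variable {S : Set ℕ}

lemma step_split (l1 : List BinTree) (h : (l1.length : ℕ) ∈ S) (B C : BinTree)
    (l2 : List BinTree) :
    RightArmStep S (unarm (l1 ++ node B C :: l2)) (unarm (l1 ++ B :: C :: l2)) :=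
  ⟨l1.length, h, Or.inl (rotR_unarm l1 B C l2)⟩

lemma step_merge (l1 : List BinTree) (h : (l1.length : ℕ) ∈ S) (B C : BinTree)
    (l2 : List BinTree) :
    RightArmStep S (unarm (l1 ++ B :: C :: l2)) (unarm (l1 ++ node B C :: l2)) :=
  ⟨l1.length, h, Or.inr (rotR_unarm l1 B C l2)⟩

lemma step_merge0 (h0 : (0 : ℕ) ∈ S) (B C : BinTree) (l2 : List BinTree) :
    RightArmStep S (unarm (B :: C :: l2)) (unarm (node B C :: l2)) :=
  step_merge [] h0 B C l2

/-! ### Phase 1: unfolding the head along its left spine -/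

lemma chain_unfold (h0 : (0 : ℕ) ∈ S) :
    ∀ (A : BinTree) (l : List BinTree),
    ChainLen (RightArmStep S) (spineT A).length (unarm (A :: l))
      (unarm (leaf :: (spineT A ++ l))) := by
  intro A
  induction A with
  | leaf => intro l; exact chain_zero
  | node B C ih =>
    intro l
    have hlen : (spineT (node B C)).length = (spineT B).length + 1 := by
      simp [spineT]
    rw [hlen]
    refine chain_succ (step_split [] h0 B C l) ?_
    have := ih (C :: l)
    have heq : spineT B ++ C :: l = (spineT B ++ [C]) ++ l := by simp
    rw [heq] at this
    exact this

/-! ### Phase 3: folding the front -/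

lemma foldN_length : ∀ (k : ℕ) (l : List BinTree), k + 1 ≤ l.length →
    (foldN k l).length + k = l.length := by
  intro k
  induction k with
  | zero => intro l _; simp [foldN]
  | succ k ih =>
    intro l h
    obtain ⟨X, Y, t, rfl⟩ : ∃ X Y t, l = X :: Y :: t := by
      cases l with
      | nil => simp at h
      | cons X l' =>
        cases l' with
        | nil => simp at h
        | cons Y t => exact ⟨X, Y, t, rfl⟩
    have h1 : foldN (k + 1) (X :: Y :: t) = foldN k (node X Y :: t) := by
      simp [foldN, Function.iterate_succ_apply, fold1]
    rw [h1]
    have h2 := ih (node X Y :: t) (by simp at h ⊢; omega)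
    simp at h2 ⊢
    omega

lemma chain_fold (h0 : (0 : ℕ) ∈ S) : ∀ (k : ℕ) (l : List BinTree), k + 1 ≤ l.length →
    ChainLen (RightArmStep S) k (unarm l) (unarm (foldN k l)) := by
  intro k
  induction k with
  | zero => intro l _; simp [foldN]; exact chain_zero
  | succ k ih =>
    intro l h
    obtain ⟨X, Y, t, rfl⟩ : ∃ X Y t, l = X :: Y :: t := by
      cases l with
      | nil => simp at h
      | cons X l' =>
        cases l' with
        | nil => simp at h
        | cons Y t => exact ⟨X, Y, t, rfl⟩
    have h1 : foldN (k + 1) (X :: Y :: t) = foldN k (node X Y :: t) := by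
      simp [foldN, Function.iterate_succ_apply, fold1]
    rw [h1]
    refine chain_succ (step_merge0 h0 X Y t) (ih (node X Y :: t) ?_)
    simp at h ⊢
    omega

end RRAProof
namespace RRAProof
open BinTree

lemma flatAll_cons_leaf (R' : List BinTree) : flatAll (leaf :: R') = leaf :: flatAll R' := by
  simp [flatAll, BinTree.numLeaves]

lemma flatAll_cons_node (B C : BinTree) (R' : List BinTree) :
    flatAll (node B C :: R') = flatAll (B :: C :: R') := by
  show List.replicate (node B C).numLeaves leaf ++ flatAll R' =
    List.replicate B.numLeaves leaf ++ (List.replicate C.numLeaves leaf ++ flatAll R')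
  rw [show (node B C).numLeaves = B.numLeaves + C.numLeaves from rfl, List.replicate_add,
    List.append_assoc]

lemma LL_cons_node (B C : BinTree) (R' : List BinTree) :
    LL (node B C :: R') = LL (B :: C :: R') := by
  simp [LL, BinTree.numLeaves]; omega

lemma foldN_succ (m : ℕ) (l : List BinTree) : foldN (m + 1) l = foldN m (fold1 l) :=
  Function.iterate_succ_apply _ _ _

variable {S : Set ℕ}

/-- The main walk: flatten everything at positions `≥ j+1` while folding at the front. -/
lemma walk (h0 : (0 : ℕ) ∈ S) (j : ℕ) (hj : (j + 1 : ℕ) ∈ S) :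
    ∀ (μ : ℕ) (R P : List BinTree) (Hd : BinTree),
    2 * KL R + R.length ≤ μ → (R ≠ [] → P.length = j) →
    ∃ w z, z ≤ LL R ∧ (KL R = 0 ∧ LL R = z ∨ 2 ≤ z) ∧ w = KL R + (LL R - z) ∧
      ChainLen (RightArmStep S) w (unarm (Hd :: (P ++ R)))
        (unarm (foldN (LL R - z) (Hd :: (P ++ flatAll R)))) := by
  intro μ
  induction μ with
  | zero =>
    intro R P Hd hm _
    have hR : R = [] := by
      cases R with
      | nil => rfl
      | cons A R' => simp at hm
    subst hR
    refine ⟨0, 0, le_refl _, Or.inl ⟨rfl, rfl⟩, rfl, ?_⟩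
    show ChainLen _ 0 _ _
    simp [flatAll, foldN, LL]
    exact chain_zero
  | succ μ ih =>
    intro R P Hd hm hP
    by_cases hK : KL R = 0
    · -- R is all leaves: stop
      refine ⟨0, LL R, le_refl _, Or.inl ⟨hK, rfl⟩, by omega, ?_⟩
      rw [flatAll_of_KL_zero R hK]
      simp [foldN]
      exact chain_zero
    · obtain ⟨A, R', rfl⟩ : ∃ A R', R = A :: R' := by
        cases R with
        | nil => simp [KL] at hK
        | cons A R' => exact ⟨A, R', rfl⟩
      have hPl : P.length = j := hP (by simp)
      cases A with
      | leaf =>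
        -- advance
        have hKeq : KL (leaf :: R') = KL R' := by simp [KL, BinTree.numNodes]
        have hK' : KL R' ≠ 0 := fun h => hK (hKeq.trans h)
        have hm' : 2 * KL R' + R'.length ≤ μ := by
          rw [hKeq] at hm; simp at hm; omega
        have hLeq : LL (leaf :: R') = LL R' + 1 := by
          simp [LL, BinTree.numLeaves]; omega
        cases P with
        | nil =>
          have hj0 : (0 : ℕ) = j := by simpa using hPl
          obtain ⟨w₂, z₂, hz₂, hD₂, hw₂, hc₂⟩ :=
            ih R' [] (node Hd leaf) hm' (fun _ => by simpa using hj0)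
          have hz2' : 2 ≤ z₂ := by
            rcases hD₂ with ⟨h1, _⟩ | h1
            · exact absurd h1 hK'
            · exact h1
          refine ⟨w₂ + 1, z₂, ?_, Or.inr hz2', by rw [hKeq, hLeq]; omega, ?_⟩
          · rw [hLeq]; omega
          · have hsub : LL (leaf :: R') - z₂ = (LL R' - z₂) + 1 := by rw [hLeq]; omega
            rw [hsub, flatAll_cons_leaf]
            simp only [List.nil_append]
            rw [foldN_succ]
            have e1 : fold1 (Hd :: leaf :: flatAll R') = node Hd leaf :: flatAll R' := rfl
            rw [e1]
            refine chain_succ (step_merge0 h0 Hd leaf R') ?_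
            simpa using hc₂
        | cons Q P₁ =>
          have hP₂ : (P₁ ++ [leaf]).length = j := by
            simp at hPl ⊢; omega
          obtain ⟨w₂, z₂, hz₂, hD₂, hw₂, hc₂⟩ :=
            ih R' (P₁ ++ [leaf]) (node Hd Q) hm' (fun _ => hP₂)
          have hz2' : 2 ≤ z₂ := by
            rcases hD₂ with ⟨h1, _⟩ | h1
            · exact absurd h1 hK'
            · exact h1
          refine ⟨w₂ + 1, z₂, ?_, Or.inr hz2', by rw [hKeq, hLeq]; omega, ?_⟩
          · rw [hLeq]; omega
          · have hsub : LL (leaf :: R') - z₂ = (LL R' - z₂) + 1 := by rw [hLeq]; omega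
            rw [hsub, flatAll_cons_leaf, foldN_succ]
            show ChainLen _ (w₂ + 1) (unarm (Hd :: Q :: (P₁ ++ leaf :: R'))) _
            refine chain_succ (step_merge0 h0 Hd Q (P₁ ++ leaf :: R')) ?_
            have e1 : fold1 (Hd :: (Q :: P₁ ++ leaf :: flatAll R')) =
                node Hd Q :: ((P₁ ++ [leaf]) ++ flatAll R') := by
              simp [fold1]
            rw [e1]
            have e2 : (node Hd Q :: (P₁ ++ leaf :: R') : List BinTree) =
                node Hd Q :: ((P₁ ++ [leaf]) ++ R') := by simp
            rw [e2]
            exact hc₂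
      | node B C =>
        -- split
        have hKeq : KL (B :: C :: R') + 1 = KL (node B C :: R') := by
          simp [KL, BinTree.numNodes]; omega
        have hm' : 2 * KL (B :: C :: R') + (B :: C :: R').length ≤ μ := by
          simp at hm ⊢; simp [KL, BinTree.numNodes] at hm hKeq ⊢; omega
        obtain ⟨w₂, z₂, hz₂, hD₂, hw₂, hc₂⟩ := ih (B :: C :: R') P Hd hm' (fun _ => hPl)
        have hz2' : 2 ≤ z₂ := by
          rcases hD₂ with ⟨h1, h2⟩ | h1
          · have := LL_eq_KL (B :: C :: R')
            simp at this
            omega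
          · exact h1
        refine ⟨w₂ + 1, z₂, ?_, Or.inr hz2', ?_, ?_⟩
        · rw [LL_cons_node]; exact hz₂
        · rw [LL_cons_node, ← hKeq]; omega
        · rw [LL_cons_node, flatAll_cons_node]
          refine chain_succ ?_ hc₂
          have := step_split (Hd :: P) (by simpa [hPl] using hj) B C R'
          simpa using this
end RRAProof
namespace RRAProof
open BinTree

variable {S : Set ℕ}

/-- Any tree with `n ≥ 3` interior nodes can be moved to the canonical tree of its
component in at most `2n - 4` allowed rotations. -/
lemma tree_to_Z (h0 : (0 : ℕ) ∈ S) (j : ℕ) (hj : (j + 1 : ℕ) ∈ S) (n : ℕ) (hn : 3 ≤ n)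
    (T : BinTree) (hT : T.numNodes = n) :
    ∃ w, w ≤ 2 * n - 4 ∧ ChainLen (RightArmStep S) w T (Zc (j + 1) T) := by
  obtain ⟨A₀, R₀, rfl⟩ : ∃ A R, T = node A R := by
    cases T with
    | leaf => simp [BinTree.numNodes] at hT; omega
    | node A R => exact ⟨A, R, rfl⟩
  set Rest := spineT A₀ ++ armL R₀ with hRest
  set P := Rest.take j with hPdef
  set R := Rest.drop j with hRdef
  have hPR : P ++ R = Rest := List.take_append_drop j Rest
  -- Phase 1 : unfold the left spine of the head
  have hstart : unarm (A₀ :: armL R₀) = node A₀ R₀ := unarm_armL (node A₀ R₀)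
  have c1 : ChainLen (RightArmStep S) (spineT A₀).length (node A₀ R₀)
      (unarm (leaf :: Rest)) := by
    rw [← hstart]; exact chain_unfold h0 A₀ (armL R₀)
  -- Phase 2 : the walk
  have hPhyp : R ≠ [] → P.length = j := by
    intro hR
    have hlt : j < Rest.length := by
      by_contra h
      push_neg at h
      exact hR (List.drop_eq_nil_of_le h)
    rw [hPdef, List.length_take]
    omega
  obtain ⟨w, z, hz, hD, hw, c2⟩ :=
    walk h0 j hj (2 * KL R + R.length) R P leaf (le_refl _) hPhyp
  rw [hPR] at c2
  -- canonical list
  have hcanon : canonL (j + 1) (node A₀ R₀) = leaf :: (P ++ flatAll R) := by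
    show (repL (node A₀ R₀)).take (j + 1) ++ flatAll ((repL (node A₀ R₀)).drop (j + 1)) = _
    rw [show repL (node A₀ R₀) = leaf :: Rest from rfl]
    rw [List.take_succ_cons, List.drop_succ_cons]
    rfl
  rw [← hcanon] at c2
  set canon := canonL (j + 1) (node A₀ R₀) with hcanondef
  set m := LL R - z with hm
  -- Phase 3 : fold the front down to length ≤ 3
  have hlc : canon.length = 1 + P.length + LL R := by
    rw [hcanon]; simp [length_flatAll]; omega
  have hm1 : m + 1 ≤ canon.length := by omega
  have hlen : (foldN m canon).length + m = canon.length := foldN_length m canon hm1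
  set k₂ := (foldN m canon).length - 3 with hk₂
  have c3 : ChainLen (RightArmStep S) k₂ (unarm (foldN m canon))
      (unarm (foldN k₂ (foldN m canon))) := chain_fold h0 k₂ (foldN m canon) (by omega)
  have hiter : foldN k₂ (foldN m canon) = foldN (k₂ + m) canon :=
    (Function.iterate_add_apply fold1 k₂ m canon).symm
  have hk2m : k₂ + m = canon.length - 3 := by
    rcases hD with ⟨h1, h2⟩ | h1 <;> omega
  -- assemble the chain
  have call : ChainLen (RightArmStep S) ((spineT A₀).length + (w + k₂)) (node A₀ R₀)
      (Zc (j + 1) (node A₀ R₀)) := by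
    refine chain_trans c1 (chain_trans c2 ?_)
    rw [show Zc (j + 1) (node A₀ R₀) = unarm (foldN (canon.length - 3) canon) from rfl,
      ← hk2m, ← hiter]
    exact c3
  refine ⟨_, ?_, call⟩
  -- arithmetic bound
  have hKs : KL (spineT A₀) + (spineT A₀).length = A₀.numNodes := KL_spineT A₀
  have hnum : A₀.numNodes + R₀.numNodes + 1 = n := by
    rw [← hT]; rfl
  have hR₀ : R₀.numNodes = KL (armL R₀) + (armL R₀).length := numNodes_armL R₀
  have hKRest : KL Rest = KL (spineT A₀) + KL (armL R₀) := KL_append _ _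
  have hKPR : KL P + KL R = KL Rest := by
    rw [← hPR]; exact (KL_append P R).symm
  have hLR : LL R = KL R + R.length := LL_eq_KL R
  have hlPR : P.length + R.length = Rest.length := by
    rw [← hPR]; simp
  have hRestLen : Rest.length = (spineT A₀).length + (armL R₀).length := by
    rw [hRest]; simp
  rcases hD with ⟨h1, h2⟩ | h1 <;> omega

end RRAProof
namespace RRAProof
open BinTree

lemma rotR_arm_decomp : ∀ {k : ℕ} {T T' : BinTree}, RotR k T T' →
    ∃ l1 B C l2, l1.length = k ∧ armL T = l1 ++ node B C :: l2 ∧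
      armL T' = l1 ++ B :: C :: l2 := by
  intro k T T' h
  induction h with
  | root A B C => exact ⟨[], A, B, armL C, rfl, rfl, rfl⟩
  | step L h ih =>
    obtain ⟨l1, B, C, l2, hl, h1, h2⟩ := ih
    exact ⟨L :: l1, B, C, l2, by simp [hl], by simp [armL, h1], by simp [armL, h2]⟩

lemma armL_cons {T A : BinTree} {t : List BinTree} (h : armL T = A :: t) :
    ∃ X, T = node A X ∧ armL X = t := by
  cases T with
  | leaf => simp [armL] at h
  | node A' X =>
    rw [armL] at h
    injection h with h1 h2
    exact ⟨X, by rw [h1], h2⟩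

lemma canon_splice (i : ℕ) (x l2 : List BinTree) (B C : BinTree) (hx : i ≤ x.length) :
    (x ++ node B C :: l2).take i ++ flatAll ((x ++ node B C :: l2).drop i) =
    (x ++ B :: C :: l2).take i ++ flatAll ((x ++ B :: C :: l2).drop i) := by
  rw [take_append_le i x _ hx, take_append_le i x _ hx, drop_append_le i x _ hx,
    drop_append_le i x _ hx, flatAll_append, flatAll_append, flatAll_cons_node]

lemma canon_rotR (j : ℕ) {k : ℕ} {T T' : BinTree} (hk : k = 0 ∨ j + 1 ≤ k)
    (h : RotR k T T') : canonL (j + 1) T = canonL (j + 1) T' := by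
  obtain ⟨l1, B, C, l2, hl, h1, h2⟩ := rotR_arm_decomp h
  rcases hk with rfl | hk
  · -- rotation at the root : even the fully split form is unchanged
    have hl1 : l1 = [] := List.length_eq_zero_iff.mp hl
    subst hl1
    simp only [List.nil_append] at h1 h2
    obtain ⟨X, rfl, hX⟩ := armL_cons h1
    obtain ⟨Y, rfl, hY⟩ := armL_cons h2
    have hrep : repL (node (node B C) X) = repL (node B Y) := by
      show leaf :: (spineT (node B C) ++ armL X) = leaf :: (spineT B ++ armL Y)
      rw [hX, hY, show spineT (node B C) = spineT B ++ [C] from rfl]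
      simp
    unfold canonL
    rw [hrep]
  · -- rotation at level k ≥ j+1
    obtain ⟨A₀, l1', rfl⟩ : ∃ A₀ l1', l1 = A₀ :: l1' := by
      cases l1 with
      | nil => simp at hl; omega
      | cons A₀ l1' => exact ⟨A₀, l1', rfl⟩
    obtain ⟨X, rfl, hX⟩ := armL_cons h1
    obtain ⟨Y, rfl, hY⟩ := armL_cons h2
    have e1 : repL (node A₀ X) = (leaf :: (spineT A₀ ++ l1')) ++ node B C :: l2 := by
      show leaf :: (spineT A₀ ++ armL X) = _
      rw [hX]; simp
    have e2 : repL (node A₀ Y) = (leaf :: (spineT A₀ ++ l1')) ++ B :: C :: l2 := by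
      show leaf :: (spineT A₀ ++ armL Y) = _
      rw [hY]; simp
    unfold canonL
    rw [e1, e2]
    refine canon_splice (j + 1) _ l2 B C ?_
    simp at hl ⊢
    omega

lemma canon_step (I : Finset ℕ) (j : ℕ) (hmin : ∀ k ∈ I, j + 1 ≤ k) {T T' : BinTree}
    (h : RightArmStep (insert 0 (I : Set ℕ)) T T') :
    canonL (j + 1) T = canonL (j + 1) T' := by
  obtain ⟨k, hk, h | h⟩ := h
  · refine canon_rotR j ?_ h
    rcases Set.mem_insert_iff.mp hk with h' | h'
    · exact Or.inl h'
    · exact Or.inr (hmin k h')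
  · refine (canon_rotR j ?_ h).symm
    rcases Set.mem_insert_iff.mp hk with h' | h'
    · exact Or.inl h'
    · exact Or.inr (hmin k h')

lemma canon_chain (I : Finset ℕ) (j : ℕ) (hmin : ∀ k ∈ I, j + 1 ≤ k) {T2 : BinTree} :
    ∀ (N : ℕ) (T1 : BinTree), ChainLen (RightArmStep (insert 0 (I : Set ℕ))) N T1 T2 →
    canonL (j + 1) T1 = canonL (j + 1) T2 := by
  intro N
  induction N with
  | zero => intro T1 h; rw [(h : T1 = T2)]
  | succ N ih =>
    intro T1 h
    obtain ⟨U, hU, hrest⟩ := h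
    rw [canon_step I j hmin hU]
    exact ih U hrest

end RRAProof

theorem rra_distance_le (I : Finset ℕ) (hpos : ∀ k ∈ I, 0 < k) (hne : I.Nonempty)
    (n : ℕ) (hn : 3 ≤ n) (T1 T2 : BinTree)
    (h1 : T1.numNodes = n) (h2 : T2.numNodes = n)
    (hdef : Reachable (RightArmStep (insert 0 (I : Set ℕ))) T1 T2) :
    stepDist (RightArmStep (insert 0 (I : Set ℕ))) T1 T2 ≤ 4 * n - 8 := by
  classical
  obtain ⟨j, hj⟩ : ∃ j, I.min' hne = j + 1 := by
    have := hpos _ (I.min'_mem hne)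
    exact ⟨I.min' hne - 1, by omega⟩
  have hmin : ∀ k ∈ I, j + 1 ≤ k := by
    intro k hk
    rw [← hj]
    exact I.min'_le k hk
  have h0 : (0 : ℕ) ∈ insert 0 (I : Set ℕ) := Set.mem_insert 0 _
  have hjS : (j + 1 : ℕ) ∈ insert 0 (I : Set ℕ) := by
    refine Set.mem_insert_of_mem _ ?_
    rw [← hj]
    exact Finset.mem_coe.mpr (I.min'_mem hne)
  obtain ⟨N, hch⟩ := hdef
  have hcanon : RRAProof.canonL (j + 1) T1 = RRAProof.canonL (j + 1) T2 :=
    RRAProof.canon_chain I j hmin N T1 hch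
  obtain ⟨w1, hw1, hc1⟩ := RRAProof.tree_to_Z h0 j hjS n hn T1 h1
  obtain ⟨w2, hw2, hc2⟩ := RRAProof.tree_to_Z h0 j hjS n hn T2 h2
  have hZ : RRAProof.Zc (j + 1) T1 = RRAProof.Zc (j + 1) T2 := by
    unfold RRAProof.Zc
    rw [hcanon]
  rw [← hZ] at hc2
  have hc2' := RRAProof.chain_symm (RRAProof.rightArmStep_symm _) hc2
  have hcomb := RRAProof.chain_trans hc1 hc2'
  have hmem : (w1 + w2) ∈ {m | ChainLen (RightArmStep (insert 0 (I : Set ℕ))) m T1 T2} := hcomb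
  have hle : stepDist (RightArmStep (insert 0 (I : Set ℕ))) T1 T2 ≤ w1 + w2 :=
    Nat.sInf_le hmem
  omega
end

section
/- Let S′ = {x_0, x_1, x_2, …, x_m} with m ≥ 1. Then for every n > m + 4 there exist trees T1 and T2, each with n interior nodes, such that the restricted right-arm rotation distance d_RRA^{S′}(T1,T2) is defined and d_RRA^{S′}(T1,T2) ≥ 4n − 4m − 4. -/
open BinTree


/-! ### Auxiliary development for Statement 9 -/

namespace RRA9

open BinTree

/-- Left vine. -/
def lvine : ℕ → BinTree
  | 0 => .leaf
  | q + 1 => .node (lvine q) .leaf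

lemma numLeaves_pos (T : BinTree) : 1 ≤ T.numLeaves := by
  induction T with
  | leaf => simp [numLeaves]
  | node l r ihl ihr => simp only [numLeaves]; omega

lemma numLeaves_eq (T : BinTree) : T.numLeaves = T.numNodes + 1 := by
  induction T with
  | leaf => rfl
  | node l r ihl ihr => simp only [numLeaves, numNodes, ihl, ihr]; omega

lemma numNodes_allRight (j : ℕ) : (allRight j).numNodes = j := by
  induction j with
  | zero => rfl
  | succ j ih => simp [allRight, numNodes, ih]

lemma numLeaves_allRight (j : ℕ) : (allRight j).numLeaves = j + 1 := by
  induction j with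
  | zero => rfl
  | succ j ih => simp [allRight, numLeaves, ih]; omega

/-- Sum of a weight over all carets of a subtree placed with leaf offset `o`;
a caret contributes `w a ℓ` where `a` is its first leaf and `ℓ` its number of leaves. -/
def csum (w : ℕ → ℕ → ℕ) : BinTree → ℕ → ℕ
  | .leaf, _ => 0
  | .node l r, o => csum w l o + csum w r (o + l.numLeaves) + w o (l.numLeaves + r.numLeaves)

/-- Sum of a weight over all carets hanging (strictly) off the right arm. -/
def asum (w : ℕ → ℕ → ℕ) : BinTree → ℕ → ℕ
  | .leaf, _ => 0
  | .node l r, o => csum w l o + asum w r (o + l.numLeaves)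

/-- Length of the right arm. -/
def armLen : BinTree → ℕ
  | .leaf => 0
  | .node _ r => armLen r + 1

lemma armLen_rotR {k : ℕ} {U V : BinTree} (h : RotR k U V) :
    armLen V = armLen U + 1 := by
  induction h with
  | root A B C => simp [armLen]
  | step L h ih => simp [armLen, ih]

lemma csum_eq_zero {w : ℕ → ℕ → ℕ} (T : BinTree) (o : ℕ)
    (h : ∀ x y, o ≤ x → x + y ≤ o + T.numLeaves → w x y = 0) : csum w T o = 0 := by
  induction T generalizing o with
  | leaf => rfl
  | node l r ihl ihr =>
      have hr := numLeaves_pos r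
      have h1 : csum w l o = 0 := ihl o (fun x y hx hy =>
        h x y hx (by simp only [numLeaves]; omega))
      have h2 : csum w r (o + l.numLeaves) = 0 := ihr _ (fun x y hx hy =>
        h x y (by omega) (by simp only [numLeaves]; omega))
      have h3 : w o (l.numLeaves + r.numLeaves) = 0 :=
        h o _ le_rfl (by simp only [numLeaves]; omega)
      simp [csum, h1, h2, h3]

lemma csum_eq_nodes {w : ℕ → ℕ → ℕ} (T : BinTree) (o : ℕ)
    (h : ∀ x y, o ≤ x → 2 ≤ y → x + y ≤ o + T.numLeaves → w x y = 1) :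
    csum w T o = T.numNodes := by
  induction T generalizing o with
  | leaf => rfl
  | node l r ihl ihr =>
      have hl := numLeaves_pos l
      have hr := numLeaves_pos r
      have h1 : csum w l o = l.numNodes := ihl o (fun x y hx h2 hy =>
        h x y hx h2 (by simp only [numLeaves]; omega))
      have h2 : csum w r (o + l.numLeaves) = r.numNodes := ihr _ (fun x y hx h2 hy =>
        h x y (by omega) h2 (by simp only [numLeaves]; omega))
      have h3 : w o (l.numLeaves + r.numLeaves) = 1 :=
        h o _ le_rfl (by omega) (by simp only [numLeaves]; omega)
      simp only [csum, numNodes, h1, h2, h3]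

lemma asum_eq_zero {w : ℕ → ℕ → ℕ} (T : BinTree) (o : ℕ)
    (h : ∀ x y, o ≤ x → w x y = 0) : asum w T o = 0 := by
  induction T generalizing o with
  | leaf => rfl
  | node l r ihl ihr =>
      have h1 : csum w l o = 0 := csum_eq_zero l o (fun x y hx _ => h x y hx)
      have h2 : asum w r (o + l.numLeaves) = 0 := ihr _ (fun x y hx => h x y (by omega))
      simp [asum, h1, h2]

/-- Weight of "good" carets: the caret's leaves contain both `c - 1` and `c`. -/
def gw (c x y : ℕ) : ℕ := if x < c ∧ c < x + y then 1 else 0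

/-- Weight of "bad" carets: all of the caret's leaves are `< c`. -/
def bw (c x y : ℕ) : ℕ := if x + y ≤ c then 1 else 0

/-- Weight of carets whose first leaf is exactly `c`. -/
def ew (c x y : ℕ) : ℕ := if x = c then 1 else 0

lemma gw_le (c x y : ℕ) : gw c x y ≤ 1 := by unfold gw; split <;> omega
lemma bw_le (c x y : ℕ) : bw c x y ≤ 1 := by unfold bw; split <;> omega

/-- Key structural lemma: a right rotation at level `k` on the right arm removes
exactly one off-arm caret (with first leaf `a` and `ℓ ≥ 2` leaves) and leaves all
other off-arm caret spans unchanged; moreover all off-arm carets of the source whose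
leaves lie entirely before `a` number at least `a - o - k`, and no off-arm caret of
the source contains both leaves `a - 1` and `a`. -/
lemma rotR_key {k : ℕ} {U V : BinTree} (h : RotR k U V) :
    ∀ o : ℕ, ∃ a ℓ, 2 ≤ ℓ ∧ o ≤ a ∧ (∀ w, asum w U o = asum w V o + w a ℓ) ∧
      asum (gw a) U o = 0 ∧ a ≤ asum (bw a) U o + k + o := by
  induction h with
  | root A B C =>
      intro o
      refine ⟨o, A.numLeaves + B.numLeaves, ?_, le_rfl, ?_, ?_, ?_⟩
      · have := numLeaves_pos A; have := numLeaves_pos B; omega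
      · intro w
        simp only [asum, csum, numLeaves]
        rw [← Nat.add_assoc o A.numLeaves B.numLeaves]
        omega
      · exact asum_eq_zero _ _ (fun x y hx => by unfold gw; exact if_neg (by omega))
      · omega
  | step L h ih =>
      intro o
      obtain ⟨a, ℓ, h2, ha, heq, hg, hb⟩ := ih (o + L.numLeaves)
      refine ⟨a, ℓ, h2, by omega, ?_, ?_, ?_⟩
      · intro w
        simp only [asum]
        rw [heq w]
        omega
      · have hz : csum (gw a) L o = 0 := csum_eq_zero L o (fun x y hx hy => by
          unfold gw; exact if_neg (by omega))
        simp only [asum]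
        rw [hz, hg]
      · have hz : csum (bw a) L o = L.numNodes := csum_eq_nodes L o (fun x y hx h2y hy => by
          unfold bw; exact if_pos (by omega))
        have hLn := numLeaves_eq L
        simp only [asum]
        rw [hz]
        omega

/-- The split-counting potential. -/
def psi (c q : ℕ) (T : BinTree) : ℕ :=
  if asum (ew c) T 0 = 0 then asum (bw c) T 0
  else max (asum (bw c) T 0) (asum (gw c) T 0 + q)

lemma psi_ge_b (c q : ℕ) (T : BinTree) : asum (bw c) T 0 ≤ psi c q T := by
  unfold psi; split
  · exact le_rfl
  · exact le_max_left _ _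

lemma psi_ge_g (c q : ℕ) {T : BinTree} (h : ¬ asum (ew c) T 0 = 0) :
    asum (gw c) T 0 + q ≤ psi c q T := by
  unfold psi; rw [if_neg h]; exact le_max_right _ _

lemma psi_split {m c q k : ℕ} {U V : BinTree} (hk : k ≤ m) (hq : q + m ≤ c + 1)
    (h : RotR k U V) : psi c q U ≤ psi c q V + 1 := by
  obtain ⟨a, ℓ, hl, -, heq, hg, hb⟩ := rotR_key h 0
  have hB := heq (bw c)
  have hG := heq (gw c)
  have hN := heq (ew c)
  have hbV := psi_ge_b c q V
  by_cases hNU : asum (ew c) U 0 = 0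
  · rw [psi, if_pos hNU]
    have := bw_le c a ℓ
    omega
  · rw [psi, if_neg hNU]
    by_cases hac : a = c
    · subst hac
      have hbw : bw a a ℓ = 0 := by unfold bw; exact if_neg (by omega)
      have hble := bw_le a a ℓ
      refine max_le ?_ ?_
      · omega
      · rw [hg]; omega
    · have hewz : ew c a ℓ = 0 := by unfold ew; exact if_neg hac
      have hNV : ¬ asum (ew c) V 0 = 0 := by omega
      have hgV := psi_ge_g c q hNV
      have := gw_le c a ℓ
      have := bw_le c a ℓ
      refine max_le ?_ ?_ <;> omega

lemma psi_merge {c q k : ℕ} {U V : BinTree} (h : RotR k V U) : psi c q U ≤ psi c q V := by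
  obtain ⟨a, ℓ, -, -, heq, -, -⟩ := rotR_key h 0
  have hB := heq (bw c)
  have hG := heq (gw c)
  have hN := heq (ew c)
  have hbV := psi_ge_b c q V
  by_cases hNU : asum (ew c) U 0 = 0
  · rw [psi, if_pos hNU]; omega
  · have hNV : ¬ asum (ew c) V 0 = 0 := by omega
    have hgV := psi_ge_g c q hNV
    rw [psi, if_neg hNU]
    refine max_le ?_ ?_ <;> omega

lemma chain_bound {m c q : ℕ} {V : BinTree} (hV : psi c q V = 0) (hq : q + m ≤ c + 1) :
    ∀ d U, ChainLen (RightArmStep {k | k ≤ m}) d U V →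
      2 * psi c q U + armLen U ≤ d + armLen V := by
  intro d
  induction d with
  | zero =>
      intro U h
      have hUV : U = V := h
      subst hUV
      omega
  | succ d ih =>
      intro U h
      obtain ⟨W, hUW, hWV⟩ := h
      obtain ⟨k, hk, hcase⟩ := hUW
      have hk' : k ≤ m := hk
      have hIH := ih W hWV
      rcases hcase with hs | hms
      · have h1 := psi_split (c := c) (q := q) hk' hq hs
        have h2 := armLen_rotR hs
        omega
      · have h1 := psi_merge (c := c) (q := q) hms
        have h2 := armLen_rotR hms
        omega

lemma csum_gw_allRight (c : ℕ) : ∀ j o, o + j = c + 1 → j ≤ csum (gw c) (allRight j) o + 1 := by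
  intro j
  induction j with
  | zero => intro o _; omega
  | succ j ih =>
      intro o ho
      simp only [allRight, csum, numLeaves, numLeaves_allRight]
      rcases Nat.eq_zero_or_pos j with hj | hj
      · omega
      · have h1 := ih (o + 1) (by omega)
        have h2 : gw c o (1 + (j + 1)) = 1 := by
          unfold gw; exact if_pos ⟨by omega, by omega⟩
        omega

lemma csum_bw_allRight (c : ℕ) : ∀ j o, c < o + j + 1 → csum (bw c) (allRight j) o = 0 := by
  intro j
  induction j with
  | zero => intro o _; rfl
  | succ j ih =>
      intro o ho
      have h1 := ih (o + 1) (by omega)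
      have h2 : bw c o (1 + (j + 1)) = 0 := by unfold bw; exact if_neg (by omega)
      simp only [allRight, csum, numLeaves, numLeaves_allRight]
      omega

lemma csum_ew_allRight_zero (c : ℕ) : ∀ j o, o + j ≤ c → csum (ew c) (allRight j) o = 0 := by
  intro j
  induction j with
  | zero => intro o _; rfl
  | succ j ih =>
      intro o ho
      have h1 := ih (o + 1) (by omega)
      have h2 : ew c o (1 + (j + 1)) = 0 := by unfold ew; exact if_neg (by omega)
      simp only [allRight, csum, numLeaves, numLeaves_allRight]
      omega

lemma csum_ew_allRight_one (c : ℕ) : ∀ j o, o ≤ c → c < o + j → 1 ≤ csum (ew c) (allRight j) o := by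
  intro j
  induction j with
  | zero => intro o h1 h2; omega
  | succ j ih =>
      intro o h1 h2
      simp only [allRight, csum, numLeaves, numLeaves_allRight]
      by_cases ho : o = c
      · have h3 : ew c o (1 + (j + 1)) = 1 := by unfold ew; exact if_pos ho
        omega
      · have h4 := ih (o + 1) (by omega) (by omega)
        omega

lemma asum_hang (w : ℕ → ℕ → ℕ) (T : BinTree) :
    asum w (BinTree.node T .leaf) 0 = csum w T 0 := by
  simp [asum]

lemma asum_T2 (w : ℕ → ℕ → ℕ) (j : ℕ) :
    asum w (BinTree.node (BinTree.node (allRight j) .leaf) .leaf) 0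
      = csum w (allRight j) 0 + w 0 (j + 1 + 1) := by
  simp [asum, csum, numLeaves, numLeaves_allRight]

lemma psi_T2 {c q : ℕ} (hc : 0 < c) :
    psi c q (BinTree.node (BinTree.node (allRight c) .leaf) .leaf) = 0 := by
  have hN : asum (ew c) (BinTree.node (BinTree.node (allRight c) .leaf) .leaf) 0 = 0 := by
    rw [asum_T2]
    have h1 := csum_ew_allRight_zero c c 0 (by omega)
    have h2 : ew c 0 (c + 1 + 1) = 0 := by unfold ew; exact if_neg (by omega)
    omega
  have hB : asum (bw c) (BinTree.node (BinTree.node (allRight c) .leaf) .leaf) 0 = 0 := by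
    rw [asum_T2]
    have h1 := csum_bw_allRight c c 0 (by omega)
    have h2 : bw c 0 (c + 1 + 1) = 0 := by unfold bw; exact if_neg (by omega)
    omega
  rw [psi, if_pos hN, hB]

lemma psi_T1 {c q : ℕ} :
    c + q ≤ psi c q (BinTree.node (allRight (c + 1)) .leaf) := by
  have hN : ¬ asum (ew c) (BinTree.node (allRight (c + 1)) .leaf) 0 = 0 := by
    rw [asum_hang]
    have := csum_ew_allRight_one c (c + 1) 0 (by omega) (by omega)
    omega
  have hG : c ≤ asum (gw c) (BinTree.node (allRight (c + 1)) .leaf) 0 := by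
    rw [asum_hang]
    have := csum_gw_allRight c (c + 1) 0 (by omega)
    omega
  have := psi_ge_g c q hN
  omega

/-! ### Reachability -/

lemma chain_append {r : BinTree → BinTree → Prop} :
    ∀ (a : ℕ) {b : ℕ} {T U V : BinTree},
      ChainLen r a T U → ChainLen r b U V → ChainLen r (a + b) T V := by
  intro a
  induction a with
  | zero =>
      intro b T U V h1 h2
      have hTU : T = U := h1
      subst hTU
      simpa using h2
  | succ a ih =>
      intro b T U V h1 h2
      obtain ⟨W, hW, hrest⟩ := h1
      have he : a + 1 + b = (a + b) + 1 := by omega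
      rw [he]
      exact ⟨W, hW, ih hrest h2⟩

lemma reach_refl {r : BinTree → BinTree → Prop} {T : BinTree} : Reachable r T T := ⟨0, rfl⟩

lemma reach_trans {r : BinTree → BinTree → Prop} {T U V : BinTree}
    (h1 : Reachable r T U) (h2 : Reachable r U V) : Reachable r T V := by
  obtain ⟨a, ha⟩ := h1
  obtain ⟨b, hb⟩ := h2
  exact ⟨a + b, chain_append a ha hb⟩

lemma reach_head {r : BinTree → BinTree → Prop} {T U V : BinTree}
    (h : r T U) (h2 : Reachable r U V) : Reachable r T V := by
  obtain ⟨d, hd⟩ := h2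
  exact ⟨d + 1, U, h, hd⟩

lemma ras_split {m k : ℕ} {T U : BinTree} (hk : k ≤ m) (h : RotR k T U) :
    RightArmStep {k | k ≤ m} T U := ⟨k, hk, Or.inl h⟩

lemma ras_merge {m k : ℕ} {T U : BinTree} (hk : k ≤ m) (h : RotR k U T) :
    RightArmStep {k | k ≤ m} T U := ⟨k, hk, Or.inr h⟩

lemma reachA {m : ℕ} (hm : 1 ≤ m) :
    ∀ j p, Reachable (RightArmStep {k | k ≤ m})
      (BinTree.node (lvine p) (BinTree.node (allRight j) .leaf))
      (BinTree.node (lvine (p + j)) (BinTree.node .leaf .leaf)) := by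
  intro j
  induction j with
  | zero => intro p; exact reach_refl
  | succ j ih =>
      intro p
      have s1 : RightArmStep {k | k ≤ m}
          (BinTree.node (lvine p) (BinTree.node (allRight (j + 1)) .leaf))
          (BinTree.node (lvine p) (BinTree.node .leaf (BinTree.node (allRight j) .leaf))) :=
        ras_split hm (RotR.step _ (RotR.root .leaf (allRight j) .leaf))
      have s2 : RightArmStep {k | k ≤ m}
          (BinTree.node (lvine p) (BinTree.node .leaf (BinTree.node (allRight j) .leaf)))
          (BinTree.node (lvine (p + 1)) (BinTree.node (allRight j) .leaf)) :=
        ras_merge (Nat.zero_le m) (RotR.root (lvine p) .leaf (BinTree.node (allRight j) .leaf))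
      have h3 := ih (p + 1)
      rw [show p + 1 + j = p + (j + 1) by omega] at h3
      exact reach_head s1 (reach_head s2 h3)

/-- Intermediate states while rebuilding the right comb. -/
def Cst (q j : ℕ) : BinTree :=
  .node (lvine q) (.node .leaf (.node (allRight j) (.node .leaf .leaf)))

lemma reachC {m : ℕ} (hm : 1 ≤ m) :
    ∀ q j, Reachable (RightArmStep {k | k ≤ m}) (Cst q j) (Cst 0 (j + q)) := by
  intro q
  induction q with
  | zero => intro j; exact reach_refl
  | succ q ih =>
      intro j
      have s1 : RightArmStep {k | k ≤ m} (Cst (q + 1) j)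
          (BinTree.node (lvine (q + 1))
            (BinTree.node (allRight (j + 1)) (BinTree.node .leaf .leaf))) :=
        ras_merge hm (RotR.step _ (RotR.root .leaf (allRight j) (BinTree.node .leaf .leaf)))
      have s2 : RightArmStep {k | k ≤ m}
          (BinTree.node (lvine (q + 1))
            (BinTree.node (allRight (j + 1)) (BinTree.node .leaf .leaf)))
          (Cst q (j + 1)) :=
        ras_split (Nat.zero_le m)
          (RotR.root (lvine q) .leaf (BinTree.node (allRight (j + 1)) (BinTree.node .leaf .leaf)))
      have h3 := ih (j + 1)
      rw [show j + 1 + q = j + (q + 1) by omega] at h3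
      exact reach_head s1 (reach_head s2 h3)

lemma reach_T1_T2 {m : ℕ} (hm : 1 ≤ m) (c : ℕ) (hc : 3 ≤ c) :
    Reachable (RightArmStep {k | k ≤ m})
      (BinTree.node (allRight (c + 1)) .leaf)
      (BinTree.node (BinTree.node (allRight c) .leaf) .leaf) := by
  obtain ⟨c3, rfl⟩ : ∃ c3, c = c3 + 3 := ⟨c - 3, by omega⟩
  have s0 : RightArmStep {k | k ≤ m}
      (BinTree.node (allRight (c3 + 3 + 1)) .leaf)
      (BinTree.node (lvine 0) (BinTree.node (allRight (c3 + 3)) .leaf)) :=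
    ras_split (Nat.zero_le m) (RotR.root .leaf (allRight (c3 + 3)) .leaf)
  have hA := reachA hm (c3 + 3) 0
  rw [show 0 + (c3 + 3) = c3 + 3 by omega] at hA
  have t2 : RightArmStep {k | k ≤ m}
      (BinTree.node (lvine (c3 + 3)) (BinTree.node .leaf .leaf))
      (BinTree.node (lvine (c3 + 2)) (BinTree.node .leaf (BinTree.node .leaf .leaf))) :=
    ras_split (Nat.zero_le m) (RotR.root (lvine (c3 + 2)) .leaf (BinTree.node .leaf .leaf))
  have t3 : RightArmStep {k | k ≤ m}
      (BinTree.node (lvine (c3 + 2)) (BinTree.node .leaf (BinTree.node .leaf .leaf)))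
      (Cst (c3 + 1) 0) :=
    ras_split (Nat.zero_le m)
      (RotR.root (lvine (c3 + 1)) .leaf (BinTree.node .leaf (BinTree.node .leaf .leaf)))
  have hC := reachC hm (c3 + 1) 0
  rw [show 0 + (c3 + 1) = c3 + 1 by omega] at hC
  have g1 : RightArmStep {k | k ≤ m} (Cst 0 (c3 + 1))
      (BinTree.node .leaf (BinTree.node (allRight (c3 + 2)) (BinTree.node .leaf .leaf))) :=
    ras_merge hm (RotR.step _ (RotR.root .leaf (allRight (c3 + 1)) (BinTree.node .leaf .leaf)))
  have g2 : RightArmStep {k | k ≤ m}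
      (BinTree.node .leaf (BinTree.node (allRight (c3 + 2)) (BinTree.node .leaf .leaf)))
      (BinTree.node (allRight (c3 + 3)) (BinTree.node .leaf .leaf)) :=
    ras_merge (Nat.zero_le m) (RotR.root .leaf (allRight (c3 + 2)) (BinTree.node .leaf .leaf))
  have g3 : RightArmStep {k | k ≤ m}
      (BinTree.node (allRight (c3 + 3)) (BinTree.node .leaf .leaf))
      (BinTree.node (BinTree.node (allRight (c3 + 3)) .leaf) .leaf) :=
    ras_merge (Nat.zero_le m) (RotR.root (allRight (c3 + 3)) .leaf .leaf)
  exact reach_head s0 (reach_trans hA (reach_head t2 (reach_head t3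
    (reach_trans hC (reach_head g1 (reach_head g2 (reach_head g3 reach_refl)))))))

end RRA9

theorem rra_distance_sharp_full (m : ℕ) (hm : 1 ≤ m) (n : ℕ) (hn : m + 4 < n) :
    ∃ T1 T2 : BinTree, T1.numNodes = n ∧ T2.numNodes = n ∧
      Reachable (RightArmStep {k | k ≤ m}) T1 T2 ∧
      4 * n - 4 * m - 4 ≤ stepDist (RightArmStep {k | k ≤ m}) T1 T2 := by
  obtain ⟨K, rfl⟩ : ∃ K, n = (K + m + 3) + 2 := ⟨n - m - 5, by omega⟩
  set c := K + m + 3 with hc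
  refine ⟨.node (allRight (c + 1)) .leaf, .node (.node (allRight c) .leaf) .leaf, ?_, ?_, ?_, ?_⟩
  · simp only [numNodes, RRA9.numNodes_allRight]
  · simp only [numNodes, RRA9.numNodes_allRight]
  · exact RRA9.reach_T1_T2 hm c (by omega)
  · have hreach := RRA9.reach_T1_T2 hm c (by omega)
    obtain ⟨D, hD⟩ := hreach
    have hne : {d | ChainLen (RightArmStep {k | k ≤ m}) d
        (BinTree.node (allRight (c + 1)) .leaf)
        (BinTree.node (BinTree.node (allRight c) .leaf) .leaf)}.Nonempty := ⟨D, hD⟩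
    have hmem := Nat.sInf_mem hne
    have hb := RRA9.chain_bound (m := m) (c := c) (q := K + 4)
      (RRA9.psi_T2 (by omega)) (by omega) _ _ hmem
    have h1 := RRA9.psi_T1 (c := c) (q := K + 4)
    have hA1 : RRA9.armLen (BinTree.node (allRight (c + 1)) .leaf) = 1 := by
      simp [RRA9.armLen]
    have hA2 : RRA9.armLen (BinTree.node (BinTree.node (allRight c) .leaf) .leaf) = 1 := by
      simp [RRA9.armLen]
    simp only [stepDist]
    omega
end

section
/- Every tree T with n interior nodes can be transformed into the all-right tree with n interior nodes by a sequence of at most n − 1 rotations, all performed at nodes on the right arm of the tree, keeping the number of interior nodes constant. -/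
open BinTree

namespace BinTree

/-- Length of the right arm. -/
def ral : BinTree → ℕ
  | leaf => 0
  | node _ R => ral R + 1

lemma ral_le : ∀ T : BinTree, ral T ≤ numNodes T
  | leaf => le_refl 0
  | node L R => by
    have := ral_le R
    simp [ral, numNodes]; omega

lemma ral_eq_allRight : ∀ T : BinTree, ral T = numNodes T → T = allRight (numNodes T)
  | leaf, _ => rfl
  | node L R, h => by
    have hR := ral_le R
    have hL : numNodes L = 0 := by
      simp [ral, numNodes] at h ⊢; omega
    have hLleaf : L = leaf := by
      cases L with
      | leaf => rfl
      | node a b => simp [numNodes] at hL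
    subst hLleaf
    have hR' : ral R = numNodes R := by simp [ral, numNodes] at h; omega
    have := ral_eq_allRight R hR'
    simp [numNodes, allRight]
    convert this using 2

lemma rotr_numNodes {k : ℕ} {T T' : BinTree} (h : RotR k T T') :
    numNodes T' = numNodes T := by
  induction h with
  | root A B C => simp [numNodes]; omega
  | step L _ ih => simp [numNodes, ih]

lemma step_exists : ∀ T : BinTree, ral T < numNodes T →
    ∃ k T', RotR k T T' ∧ ral T' = ral T + 1
  | leaf, h => by simp [ral, numNodes] at h
  | node leaf R, h => by
    have hR : ral R < numNodes R := by simp [ral, numNodes] at h; omega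
    obtain ⟨k, R', hrot, hral⟩ := step_exists R hR
    exact ⟨k + 1, node leaf R', RotR.step leaf hrot, by simp [ral, hral]⟩
  | node (node A B) R, _ =>
    ⟨0, node A (node B R), RotR.root A B R, by simp [ral]⟩

lemma chain_to_allRight : ∀ (d : ℕ) (T : BinTree), numNodes T - ral T = d →
    ChainLen RAStep d T (allRight (numNodes T))
  | 0, T, h => by
    have h1 := ral_le T
    have h2 : ral T = numNodes T := by omega
    show T = allRight (numNodes T)
    exact ral_eq_allRight T h2
  | d + 1, T, h => by
    have hlt : ral T < numNodes T := by omega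
    obtain ⟨k, T', hrot, hral⟩ := step_exists T hlt
    have hnn := rotr_numNodes hrot
    refine ⟨T', ⟨k, Or.inl hrot⟩, ?_⟩
    have := chain_to_allRight d T' (by omega)
    rwa [hnn] at this

end BinTree

theorem to_allRight_in_n_sub_one (n : ℕ) (T : BinTree) (h : T.numNodes = n) :
    ∃ k ≤ n - 1, ChainLen RAStep k T (allRight n) := by
  subst h
  refine ⟨numNodes T - ral T, ?_, chain_to_allRight _ T rfl⟩
  cases T with
  | leaf => simp [ral, numNodes]
  | node L R => simp [ral, numNodes]
end

section
/- For each n ≥ 3 there exist trees T1 and T2, each with n interior nodes, whose right-arm rotation distance satisfies d_RA(T1,T2) = 2n − 2; thus the upper bound 2n − 2 on right-arm rotation distance is sharp. -/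
open BinTree

/-! ### Auxiliary development for the sharpness theorem -/

deriving instance DecidableEq for BinTree

namespace RAsharp

open BinTree

/-- The left comb with `m` interior nodes. -/
def leftComb : ℕ → BinTree
  | 0 => leaf
  | m + 1 => node (leftComb m) leaf

/-- Grafting `m` right-arm carets above a tree. -/
def rgraft : ℕ → BinTree → BinTree
  | 0, C => C
  | m + 1, C => node leaf (rgraft m C)

/-- Shift the offsets of a multiset of placed subtrees. -/
def shiftM (d : ℕ) (s : Multiset (ℕ × BinTree)) : Multiset (ℕ × BinTree) :=
  s.map fun p => (p.1 + d, p.2)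

/-- All placed subtrees (leaf offset, subtree) rooted at interior nodes. -/
def subts : BinTree → Multiset (ℕ × BinTree)
  | leaf => 0
  | node L R => (0, node L R) ::ₘ (subts L + shiftM L.numLeaves (subts R))

/-- All placed subtrees rooted at interior nodes strictly below the right arm. -/
def hsub : BinTree → Multiset (ℕ × BinTree)
  | leaf => 0
  | node L R => subts L + shiftM L.numLeaves (hsub R)

lemma shiftM_zero (d : ℕ) : shiftM d 0 = 0 := rfl

lemma shiftM_add (d : ℕ) (s t : Multiset (ℕ × BinTree)) :
    shiftM d (s + t) = shiftM d s + shiftM d t := Multiset.map_add _ _ _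

lemma shiftM_cons (d : ℕ) (x : ℕ × BinTree) (s : Multiset (ℕ × BinTree)) :
    shiftM d (x ::ₘ s) = (x.1 + d, x.2) ::ₘ shiftM d s := Multiset.map_cons _ _ _

lemma shiftM_shiftM (d e : ℕ) (s : Multiset (ℕ × BinTree)) :
    shiftM d (shiftM e s) = shiftM (e + d) s := by
  simp only [shiftM, Multiset.map_map]
  congr 1
  funext p
  simp [Nat.add_assoc]

lemma card_shiftM (d : ℕ) (s : Multiset (ℕ × BinTree)) :
    Multiset.card (shiftM d s) = Multiset.card s := Multiset.card_map _ _

lemma card_subts (T : BinTree) : Multiset.card (subts T) = T.numNodes := by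
  induction T with
  | leaf => rfl
  | node L R ihL ihR =>
      simp only [subts, numNodes, Multiset.card_cons, Multiset.card_add, card_shiftM, ihL, ihR]

/-- A right rotation at a right-arm node removes exactly one placed hanging subtree. -/
lemma rotR_hsub {k : ℕ} {T T' : BinTree} (h : RotR k T T') :
    ∃ x, hsub T = x ::ₘ hsub T' := by
  induction h with
  | root A B C =>
      refine ⟨(0, node A B), ?_⟩
      show subts (node A B) + shiftM (numLeaves (node A B)) (hsub C) =
        (0, node A B) ::ₘ (subts A + shiftM (numLeaves A) (hsub (node B C)))
      have hcomm : B.numLeaves + A.numLeaves = A.numLeaves + B.numLeaves := Nat.add_comm _ _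
      simp only [subts, hsub, numLeaves, shiftM_add, shiftM_shiftM, Multiset.cons_add, hcomm]
      rw [add_assoc]
  | @step k R R' L hR ih =>
      obtain ⟨x, hx⟩ := ih
      refine ⟨(x.1 + L.numLeaves, x.2), ?_⟩
      show subts L + shiftM L.numLeaves (hsub R) =
        (x.1 + L.numLeaves, x.2) ::ₘ (subts L + shiftM L.numLeaves (hsub R'))
      rw [hx, shiftM_cons, Multiset.add_cons]

/-- The potential function: hanging subtrees in common with `S2` minus those in
common with `S1`. -/
noncomputable def phi (S1 S2 : Multiset (ℕ × BinTree)) (T : BinTree) : ℤ :=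
  ((hsub T).countP (· ∈ S2) : ℤ) - ((hsub T).countP (· ∈ S1) : ℤ)

lemma phi_cons (S1 S2 : Multiset (ℕ × BinTree)) (x : ℕ × BinTree)
    (M : Multiset (ℕ × BinTree)) :
    |(((x ::ₘ M).countP (· ∈ S2) : ℤ) - ((x ::ₘ M).countP (· ∈ S1) : ℤ)) -
      ((M.countP (· ∈ S2) : ℤ) - (M.countP (· ∈ S1) : ℤ))| ≤ 1 := by
  rw [Multiset.countP_cons, Multiset.countP_cons]
  split_ifs <;> simp

lemma step_phi (S1 S2 : Multiset (ℕ × BinTree)) {T T' : BinTree} (h : RAStep T T') :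
    |phi S1 S2 T - phi S1 S2 T'| ≤ 1 := by
  obtain ⟨k, h | h⟩ := h
  · obtain ⟨x, hx⟩ := rotR_hsub h
    have := phi_cons S1 S2 x (hsub T')
    simpa [phi, hx] using this
  · obtain ⟨x, hx⟩ := rotR_hsub h
    have := phi_cons S1 S2 x (hsub T)
    rw [abs_sub_comm]
    simpa [phi, hx] using this

lemma chain_phi (S1 S2 : Multiset (ℕ × BinTree)) :
    ∀ (m : ℕ) (T T' : BinTree), ChainLen RAStep m T T' →
      |phi S1 S2 T - phi S1 S2 T'| ≤ m := by
  intro m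
  induction m with
  | zero => intro T T' h; cases h; simp
  | succ m ih =>
      intro T T' h
      obtain ⟨U, hTU, hU⟩ := h
      calc |phi S1 S2 T - phi S1 S2 T'|
          ≤ |phi S1 S2 T - phi S1 S2 U| + |phi S1 S2 U - phi S1 S2 T'| := abs_sub_le _ _ _
        _ ≤ 1 + m := add_le_add (step_phi S1 S2 hTU) (ih U T' hU)
        _ = (m + 1 : ℕ) := by push_cast; ring

/-! ### The two combs and their placed subtrees -/

lemma numNodes_leftComb (m : ℕ) : (leftComb m).numNodes = m := by
  induction m with
  | zero => rfl
  | succ m ih => simp [leftComb, numNodes, ih]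

lemma numNodes_allRight (m : ℕ) : (allRight m).numNodes = m := by
  induction m with
  | zero => rfl
  | succ m ih => simp [allRight, numNodes, ih]

lemma subts_leftComb_succ (m : ℕ) :
    subts (leftComb (m + 1)) = (0, leftComb (m + 1)) ::ₘ subts (leftComb m) := by
  show ((0, leftComb (m+1)) ::ₘ (subts (leftComb m) + shiftM _ (subts leaf))) = _
  simp [subts, shiftM_zero]

lemma subts_allRight_succ (m : ℕ) :
    subts (allRight (m + 1)) = (0, allRight (m + 1)) ::ₘ shiftM 1 (subts (allRight m)) := by
  show ((0, allRight (m+1)) ::ₘ (subts leaf + shiftM (numLeaves leaf) (subts (allRight m)))) = _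
  simp [subts, numLeaves]

lemma mem_subts_leftComb {m : ℕ} {x : ℕ × BinTree} (h : x ∈ subts (leftComb m)) :
    ∃ j, 1 ≤ j ∧ j ≤ m ∧ x = (0, leftComb j) := by
  induction m with
  | zero => simp [leftComb, subts] at h
  | succ m ih =>
      rw [subts_leftComb_succ, Multiset.mem_cons] at h
      rcases h with h | h
      · exact ⟨m + 1, by omega, le_refl _, h⟩
      · obtain ⟨j, h1, h2, h3⟩ := ih h
        exact ⟨j, h1, by omega, h3⟩

lemma mem_subts_allRight {m : ℕ} {x : ℕ × BinTree} (h : x ∈ subts (allRight m)) :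
    ∃ k i, 1 ≤ i ∧ k + i = m ∧ x = (k, allRight i) := by
  induction m generalizing x with
  | zero => simp [allRight, subts] at h
  | succ m ih =>
      rw [subts_allRight_succ, Multiset.mem_cons] at h
      rcases h with h | h
      · exact ⟨0, m + 1, by omega, by omega, h⟩
      · rw [shiftM, Multiset.mem_map] at h
        obtain ⟨p, hp, hpx⟩ := h
        obtain ⟨k, i, h1, h2, h3⟩ := ih hp
        refine ⟨k + 1, i, h1, by omega, ?_⟩
        rw [← hpx, h3]

lemma leftComb_ne_allRight {j i : ℕ} (hj : 1 ≤ j) (hi : 2 ≤ i) :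
    leftComb j ≠ allRight i := by
  obtain ⟨j', rfl⟩ : ∃ j', j = j' + 1 := ⟨j - 1, by omega⟩
  obtain ⟨i', rfl⟩ : ∃ i', i = i' + 2 := ⟨i - 2, by omega⟩
  simp only [leftComb, allRight]
  intro h
  injection h with h1 h2
  cases h2

lemma disj {n : ℕ} (hn : 3 ≤ n) :
    ∀ x ∈ subts (leftComb (n - 1)), x ∉ subts (allRight (n - 1)) := by
  intro x hx1 hx2
  obtain ⟨j, hj1, hj2, rfl⟩ := mem_subts_leftComb hx1
  obtain ⟨k, i, hi1, hki, hx⟩ := mem_subts_allRight hx2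
  have hk : k = 0 := by
    have := congrArg Prod.fst hx
    simpa using this.symm
  have ht : leftComb j = allRight i := by
    have := congrArg Prod.snd hx
    simpa using this
  exact leftComb_ne_allRight hj1 (by omega) ht

/-! ### Chains: basic combinators and the explicit chain -/

lemma chain_trans {r : BinTree → BinTree → Prop} :
    ∀ (a b : ℕ) (T U V : BinTree), ChainLen r a T U → ChainLen r b U V →
      ChainLen r (a + b) T V := by
  intro a
  induction a with
  | zero => intro b T U V h1 h2; cases h1; simpa using h2
  | succ a ih =>
      intro b T U V h1 h2
      obtain ⟨W, hTW, hW⟩ := h1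
      rw [show a + 1 + b = a + b + 1 by omega]
      exact ⟨W, hTW, ih b W U V hW h2⟩

lemma raStep_symm {T T' : BinTree} (h : RAStep T T') : RAStep T' T := by
  obtain ⟨k, h | h⟩ := h
  · exact ⟨k, Or.inr h⟩
  · exact ⟨k, Or.inl h⟩

lemma chain_symm : ∀ (m : ℕ) (T T' : BinTree),
    ChainLen RAStep m T T' → ChainLen RAStep m T' T := by
  intro m
  induction m with
  | zero => intro T T' h; exact h.symm
  | succ m ih =>
      intro T T' h
      obtain ⟨U, hTU, hU⟩ := h
      have h1 : ChainLen RAStep m T' U := ih U T' hU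
      have h2 : ChainLen RAStep 1 U T := ⟨T, raStep_symm hTU, rfl⟩
      have := chain_trans m 1 T' U T h1 h2
      simpa using this

lemma chain_node_left (L : BinTree) : ∀ (m : ℕ) (U V : BinTree),
    ChainLen RAStep m U V → ChainLen RAStep m (node L U) (node L V) := by
  intro m
  induction m with
  | zero => intro U V h; cases h; rfl
  | succ m ih =>
      intro U V h
      obtain ⟨W, hUW, hW⟩ := h
      refine ⟨node L W, ?_, ih W V hW⟩
      obtain ⟨k, h | h⟩ := hUW
      · exact ⟨k + 1, Or.inl (RotR.step L h)⟩
      · exact ⟨k + 1, Or.inr (RotR.step L h)⟩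

lemma rgraft_node_leaf (m : ℕ) (C : BinTree) :
    rgraft m (node leaf C) = node leaf (rgraft m C) := by
  induction m with
  | zero => rfl
  | succ m ih => simp [rgraft, ih]

lemma chainA : ∀ (m : ℕ) (C : BinTree),
    ChainLen RAStep m (node (leftComb m) C) (rgraft m (node leaf C)) := by
  intro m
  induction m with
  | zero => intro C; rfl
  | succ m ih =>
      intro C
      refine ⟨node (leftComb m) (node leaf C), ⟨0, Or.inl (RotR.root _ _ _)⟩, ?_⟩
      have := ih (node leaf C)
      rw [rgraft_node_leaf] at this ⊢
      rw [rgraft_node_leaf] at this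
      exact this

lemma chainB : ∀ (m : ℕ) (C : BinTree),
    ChainLen RAStep m (node (allRight m) C) (rgraft m (node leaf C)) := by
  intro m
  induction m with
  | zero => intro C; rfl
  | succ m ih =>
      intro C
      refine ⟨node leaf (node (allRight m) C), ⟨0, Or.inl (RotR.root _ _ _)⟩, ?_⟩
      exact chain_node_left leaf m _ _ (ih C)

/-! ### Computing the potential at the endpoints -/

lemma hsub_node_leaf (L : BinTree) : hsub (node L leaf) = subts L := by
  show subts L + shiftM _ (hsub leaf) = subts L
  simp [hsub, shiftM_zero]

end RAsharp

open RAsharp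

theorem right_arm_distance_sharp (n : ℕ) (hn : 3 ≤ n) :
    ∃ T1 T2 : BinTree, T1.numNodes = n ∧ T2.numNodes = n ∧
      Reachable RAStep T1 T2 ∧ stepDist RAStep T1 T2 = 2 * n - 2 := by
  classical
  set T1 : BinTree := node (leftComb (n - 1)) leaf with hT1
  set T2 : BinTree := node (allRight (n - 1)) leaf with hT2
  -- the explicit chain of length `2n - 2`
  have hchain : ChainLen RAStep (2 * n - 2) T1 T2 := by
    have c1 := chainA (n - 1) leaf
    have c2 := chain_symm (n - 1) _ _ (chainB (n - 1) leaf)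
    have c := chain_trans (n - 1) (n - 1) _ _ _ c1 c2
    have h : (n - 1) + (n - 1) = 2 * n - 2 := by omega
    rwa [h] at c
  -- the lower bound via the potential function
  set S1 : Multiset (ℕ × BinTree) := RAsharp.hsub T1 with hS1
  set S2 : Multiset (ℕ × BinTree) := RAsharp.hsub T2 with hS2
  have hh1 : RAsharp.hsub T1 = subts (leftComb (n - 1)) := hsub_node_leaf _
  have hh2 : RAsharp.hsub T2 = subts (allRight (n - 1)) := hsub_node_leaf _
  have hphi1 : phi S1 S2 T1 = -((n - 1 : ℕ) : ℤ) := by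
    unfold phi
    rw [hh1]
    rw [Multiset.countP_eq_zero.mpr
      (by intro a ha hmem; rw [hS2, hh2] at hmem; exact disj hn a ha hmem)]
    rw [Multiset.countP_eq_card.mpr (by intro a ha; rw [hS1, hh1]; exact ha)]
    rw [card_subts, numNodes_leftComb]
    simp
  have hphi2 : phi S1 S2 T2 = ((n - 1 : ℕ) : ℤ) := by
    unfold phi
    rw [hh2]
    rw [Multiset.countP_eq_card.mpr (by intro a ha; rw [hS2, hh2]; exact ha)]
    rw [Multiset.countP_eq_zero.mpr
      (by intro a ha hmem; rw [hS1, hh1] at hmem; exact disj hn a hmem ha)]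
    rw [card_subts, numNodes_allRight]
    simp
  have hlow : ∀ m, ChainLen RAStep m T1 T2 → 2 * n - 2 ≤ m := by
    intro m hm
    have hb := chain_phi S1 S2 m T1 T2 hm
    rw [hphi1, hphi2] at hb
    have hb' := (abs_le.mp hb).1
    have hn' : ((n - 1 : ℕ) : ℤ) = (n : ℤ) - 1 := by omega
    rw [hn'] at hb'
    omega
  refine ⟨T1, T2, ?_, ?_, ⟨2 * n - 2, hchain⟩, ?_⟩
  · simp [hT1, numNodes, numNodes_leftComb]; omega
  · simp [hT2, numNodes, numNodes_allRight]; omega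
  · unfold stepDist
    refine le_antisymm (Nat.sInf_le hchain) (le_csInf ⟨2 * n - 2, hchain⟩ ?_)
    intro m hm
    exact hlow m hm
end
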